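/- arXiv:2409.01897 — 4 statements merged into one kernel-verified Lean document; each statement's English description precedes it below -/
import Mathlib

section
/- Let a > 0. For every u in the space 𝒞 of continuous functions u : [-1,1]\{0} → ℝ with u(1) = u(-1) and finite lim_{s→0}|s|u(s), we have I_a(J_a(u)) = u. -/
open Filter Topology MeasureTheory

noncomputable def DaInt (a : ℝ) (f : ℝ → ℝ) (s : ℝ) : ℝ :=
  ∫ t in (0:ℝ)..s, (1 - t ^ 2) ^ (a - 1) * f t

noncomputable def DaLim (a : ℝ) (f : ℝ → ℝ) (e : ℝ) : ℝ :=
  limUnder (𝓝[Set.Ioo (-1:ℝ) 1] e) (DaInt a f)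

def MemDa (a : ℝ) (f : ℝ → ℝ) : Prop :=
  ContinuousOn f (Set.Ioo (-1:ℝ) 1) ∧
  Tendsto (fun s => (1 - s ^ 2) ^ a * f s) (𝓝[Set.Ioo (-1:ℝ) 1] 1) (𝓝 0) ∧
  Tendsto (fun s => (1 - s ^ 2) ^ a * f s) (𝓝[Set.Ioo (-1:ℝ) 1] (-1)) (𝓝 0) ∧
  (∃ L : ℝ, Tendsto (DaInt a f) (𝓝[Set.Ioo (-1:ℝ) 1] 1) (𝓝 L)) ∧
  (∃ L : ℝ, Tendsto (DaInt a f) (𝓝[Set.Ioo (-1:ℝ) 1] (-1)) (𝓝 L))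

noncomputable def DaNorm (a : ℝ) (f : ℝ → ℝ) : ℝ :=
  (⨆ s : Set.Ioo (-1:ℝ) 1, (1 - (s:ℝ) ^ 2) ^ a * |f (s:ℝ)|) +
    ⨆ s : Set.Ioo (-1:ℝ) 1, |DaInt a f (s:ℝ)|

/-- The (possibly improper) integral `∫_0^s f(t)(1-t^2)^(a-1) dt`, where for `s = ±1`
it is interpreted as the improper limit. -/
noncomputable def DaIntE (a : ℝ) (f : ℝ → ℝ) (s : ℝ) : ℝ :=
  if s ∈ Set.Ioo (-1:ℝ) 1 then DaInt a f s else DaLim a f s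

/-- `I_a(f)(s) = sign s * (s⁻¹ (1-s²)^a f(s) + 2a ∫_{-sign s}^s f(t)(1-t²)^(a-1) dt)`. -/
noncomputable def Ia (a : ℝ) (f : ℝ → ℝ) (s : ℝ) : ℝ :=
  Real.sign s *
    (s⁻¹ * (1 - s ^ 2) ^ a * f s + 2 * a * (DaIntE a f s - DaIntE a f (-Real.sign s)))

/-- `J_a(u)(s) = -|s|u(1)/2 + |s|(1-s²)^{-a}u(s) - 2a|s| ∫_0^s t(1-t²)^{-(a+1)}u(t) dt`
for `s ≠ 0`, and `J_a(u)(0) = lim_{t→0} |t|u(t)`. -/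
noncomputable def Ja (a : ℝ) (u : ℝ → ℝ) (s : ℝ) : ℝ :=
  if s = 0 then limUnder (𝓝[≠] (0:ℝ)) (fun t => |t| * u t)
  else |s| * (-u 1 / 2) + |s| * (1 - s ^ 2) ^ (-a) * u s -
    2 * a * |s| * ∫ t in (0:ℝ)..s, t * (1 - t ^ 2) ^ (-(a + 1)) * u t

def MemC (u : ℝ → ℝ) : Prop :=
  ContinuousOn u (Set.Icc (-1:ℝ) 1 \ {0}) ∧ u 1 = u (-1) ∧
  ∃ L : ℝ, Tendsto (fun s => |s| * u s) (𝓝[Set.Icc (-1:ℝ) 1 \ {0}] 0) (𝓝 L)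

noncomputable def CNorm (u : ℝ → ℝ) : ℝ :=
  ⨆ s : (Set.Icc (-1:ℝ) 1 \ {0} : Set ℝ), |(s:ℝ)| * |u (s:ℝ)|

section IaJaProof
open Set

namespace IaJa

noncomputable def wF (v : ℝ → ℝ) (L : ℝ) : ℝ → ℝ := fun t => if t = 0 then L else |t| * v t

noncomputable def vp (a : ℝ) (v : ℝ → ℝ) (L : ℝ) : ℝ → ℝ :=
  fun t => (1 - t ^ 2) ^ (-(a + 1)) * wF v L t

noncomputable def Gp (a : ℝ) (v : ℝ → ℝ) (L : ℝ) (s : ℝ) : ℝ :=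
  ∫ t in (0:ℝ)..s, vp a v L t

noncomputable def Phip (a : ℝ) (v : ℝ → ℝ) (L : ℝ) (s : ℝ) : ℝ :=
  v 1 / (4 * a) * ((1 - s ^ 2) ^ a - 1) + (1 - s ^ 2) ^ a * Gp a v L s

variable {a : ℝ} {v : ℝ → ℝ} {L : ℝ}

lemma ae_ne_zero : ∀ᵐ x : ℝ, x ≠ 0 := by
  rw [ae_iff]
  have : {x : ℝ | ¬x ≠ 0} = {0} := by ext x; simp
  rw [this]; exact measure_singleton 0

lemma w_eq {t : ℝ} (ht : t ≠ 0) : wF v L t = |t| * v t := if_neg ht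

lemma w_eq_pos {t : ℝ} (ht : 0 < t) : wF v L t = t * v t := by
  rw [w_eq ht.ne', abs_of_pos ht]

lemma w_contOn (hv : MemC v)
    (hL : Tendsto (fun s => |s| * v s) (𝓝[Set.Icc (-1:ℝ) 1 \ {0}] 0) (𝓝 L)) :
    ContinuousOn (wF v L) (Set.Icc (-1:ℝ) 1) := by
  intro t ht
  rcases eq_or_ne t 0 with rfl | ht0
  · -- continuity at 0, value L
    have h1 : Set.Icc (-1:ℝ) 1 = (Set.Icc (-1:ℝ) 1 \ {0}) ∪ {0} := by
      rw [Set.diff_union_of_subset]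
      rw [Set.singleton_subset_iff]
      norm_num
    unfold ContinuousWithinAt
    have hw0 : wF v L 0 = L := if_pos rfl
    rw [hw0, h1, nhdsWithin_union]
    refine Tendsto.sup ?_ ?_
    · refine (hL.congr' ?_)
      filter_upwards [self_mem_nhdsWithin] with x hx
      exact (w_eq hx.2).symm
    · have : 𝓝[({0}:Set ℝ)] (0:ℝ) = pure 0 := nhdsWithin_singleton 0
      rw [this]
      simpa [hw0] using tendsto_pure_nhds (wF v L) 0
  · -- continuity at t ≠ 0
    have htS : t ∈ Set.Icc (-1:ℝ) 1 \ {0} := ⟨ht, ht0⟩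
    have hc : ContinuousWithinAt (fun x => |x| * v x) (Set.Icc (-1:ℝ) 1 \ {0}) t :=
      (continuous_abs.continuousWithinAt).mul (hv.1 t htS)
    have hmem : {x : ℝ | x ≠ 0} ∈ 𝓝 t := isOpen_ne.mem_nhds ht0
    have h2 : 𝓝[Set.Icc (-1:ℝ) 1] t = 𝓝[Set.Icc (-1:ℝ) 1 \ {0}] t :=
      nhdsWithin_restrict' _ hmem
    unfold ContinuousWithinAt
    rw [h2, w_eq ht0]
    refine hc.congr' ?_
    filter_upwards [eventually_mem_nhdsWithin] with x hx
    exact (w_eq hx.2).symm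

lemma w_contAt (hv : MemC v) {t : ℝ} (ht : t ∈ Set.Ioo (-1:ℝ) 1) (ht0 : t ≠ 0) :
    ContinuousAt (wF v L) t := by
  have hU : IsOpen ((Set.Ioo (-1:ℝ) 1) ∩ {x | x ≠ 0}) := isOpen_Ioo.inter isOpen_ne
  have htu : t ∈ (Set.Ioo (-1:ℝ) 1) ∩ {x | x ≠ 0} := ⟨ht, ht0⟩
  have hvu : ContinuousAt v t := by
    refine hv.1.continuousAt ?_
    refine Filter.mem_of_superset (hU.mem_nhds htu) ?_
    rintro x ⟨hx1, hx2⟩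
    exact ⟨Set.mem_Icc.2 ⟨hx1.1.le, hx1.2.le⟩, hx2⟩
  have : ContinuousAt (fun x => |x| * v x) t := (continuous_abs.continuousAt).mul hvu
  refine this.congr ?_
  filter_upwards [isOpen_ne.mem_nhds ht0] with x hx
  exact (w_eq hx).symm

lemma one_sub_sq_pos {t : ℝ} (ht : t ∈ Set.Ioo (-1:ℝ) 1) : 0 < 1 - t ^ 2 := by
  nlinarith [ht.1, ht.2]

lemma vp_contOn (hv : MemC v)
    (hL : Tendsto (fun s => |s| * v s) (𝓝[Set.Icc (-1:ℝ) 1 \ {0}] 0) (𝓝 L)) :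
    ContinuousOn (vp a v L) (Set.Ioo (-1:ℝ) 1) := by
  refine ContinuousOn.mul ?_ ((w_contOn hv hL).mono Set.Ioo_subset_Icc_self)
  refine ContinuousOn.rpow_const ?_ ?_
  · exact (continuousOn_const.sub (continuous_pow 2).continuousOn)
  · intro t ht
    exact Or.inl (one_sub_sq_pos ht).ne'

lemma vp_intble (hv : MemC v)
    (hL : Tendsto (fun s => |s| * v s) (𝓝[Set.Icc (-1:ℝ) 1 \ {0}] 0) (𝓝 L))
    {b : ℝ} (hb0 : 0 ≤ b) (hb1 : b < 1) : IntervalIntegrable (vp a v L) volume 0 b := by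
  apply ContinuousOn.intervalIntegrable
  apply (vp_contOn hv hL).mono
  rw [Set.uIcc_of_le hb0]
  intro x hx
  exact ⟨by linarith [hx.1], lt_of_le_of_lt hx.2 hb1⟩

lemma Gp_contOn (hv : MemC v)
    (hL : Tendsto (fun s => |s| * v s) (𝓝[Set.Icc (-1:ℝ) 1 \ {0}] 0) (𝓝 L))
    {b : ℝ} (hb0 : 0 ≤ b) (hb1 : b < 1) : ContinuousOn (Gp a v L) (Set.Icc 0 b) := by
  have := intervalIntegral.continuousOn_primitive_interval (μ := volume) (f := vp a v L)
    (a := 0) (b := b) ?_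
  · rwa [Set.uIcc_of_le hb0] at this
  · rw [Set.uIcc_of_le hb0]
    exact (intervalIntegrable_iff_integrableOn_Icc_of_le hb0).1 (vp_intble hv hL hb0 hb1)

lemma Gp_hasDeriv (hv : MemC v)
    (hL : Tendsto (fun s => |s| * v s) (𝓝[Set.Icc (-1:ℝ) 1 \ {0}] 0) (𝓝 L))
    {t : ℝ} (ht : t ∈ Set.Ioo (0:ℝ) 1) : HasDerivAt (Gp a v L) (vp a v L t) t := by
  have hto : t ∈ Set.Ioo (-1:ℝ) 1 := ⟨by linarith [ht.1], ht.2⟩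
  have hUo : IsOpen ((Set.Ioo (-1:ℝ) 1) ∩ {x | x ≠ 0}) := isOpen_Ioo.inter isOpen_ne
  have htu : t ∈ (Set.Ioo (-1:ℝ) 1) ∩ {x | x ≠ 0} := ⟨hto, ht.1.ne'⟩
  refine intervalIntegral.integral_hasDerivAt_right (vp_intble hv hL ht.1.le ht.2) ?_ ?_
  · exact ContinuousOn.stronglyMeasurableAtFilter hUo
      ((vp_contOn hv hL).mono Set.inter_subset_left) t htu
  · have : ContinuousAt (fun x => (1 - x ^ 2) ^ (-(a + 1))) t := by
      refine ContinuousAt.rpow_const ?_ (Or.inl (one_sub_sq_pos hto).ne')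
      exact (continuous_const.sub (continuous_pow 2)).continuousAt
    exact this.mul (w_contAt hv hto ht.1.ne')

lemma rpow_mul_rpow_neg {x : ℝ} (hx : 0 < x) (p : ℝ) : x ^ p * x ^ (-p) = 1 := by
  rw [← Real.rpow_add hx]; simp

lemma hasDerivAt_base {t : ℝ} : HasDerivAt (fun x : ℝ => 1 - x ^ 2) (-2 * t) t := by
  have h := ((hasDerivAt_pow 2 t).const_sub 1)
  simpa using h.congr_deriv (by ring)

lemma hasDerivAt_pow_a {t : ℝ} (ht : 0 < 1 - t ^ 2) (p : ℝ) :
    HasDerivAt (fun x : ℝ => (1 - x ^ 2) ^ p) (-2 * t * p * (1 - t ^ 2) ^ (p - 1)) t := by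
  have h := hasDerivAt_base.rpow_const (p := p) (Or.inl ht.ne')
  exact h.congr_deriv (by ring)

lemma prim_eq (ha : 0 < a) {c s : ℝ} (hc : 0 < c) (hcs : c ≤ s) (hs : s < 1) :
    ∫ t in c..s, t * (1 - t ^ 2) ^ (-(a + 1)) =
      1 / (2 * a) * ((1 - s ^ 2) ^ (-a) - (1 - c ^ 2) ^ (-a)) := by
  have hpos : ∀ x ∈ Set.uIcc c s, 0 < 1 - x ^ 2 := by
    intro x hx
    rw [Set.uIcc_of_le hcs] at hx
    nlinarith [hx.1, hx.2]
  have hderiv : ∀ x ∈ Set.uIcc c s,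
      HasDerivAt (fun t : ℝ => 1 / (2 * a) * (1 - t ^ 2) ^ (-a))
        (x * (1 - x ^ 2) ^ (-(a + 1))) x := by
    intro x hx
    have h := (hasDerivAt_pow_a (hpos x hx) (-a)).const_mul (1 / (2 * a))
    refine h.congr_deriv ?_
    have : -a - 1 = -(a + 1) := by ring
    rw [this]
    field_simp
  have hint : IntervalIntegrable (fun t : ℝ => t * (1 - t ^ 2) ^ (-(a + 1))) volume c s := by
    apply ContinuousOn.intervalIntegrable
    refine (continuous_id.continuousOn).mul (ContinuousOn.rpow_const ?_ ?_)
    · exact continuousOn_const.sub (continuous_pow 2).continuousOn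
    · exact fun x hx => Or.inl (hpos x hx).ne'
  have := intervalIntegral.integral_eq_sub_of_hasDerivAt hderiv hint
  rw [this]
  ring

lemma Ja_pos (hv : MemC v)
    (hL : Tendsto (fun s => |s| * v s) (𝓝[Set.Icc (-1:ℝ) 1 \ {0}] 0) (𝓝 L))
    {t : ℝ} (ht : t ∈ Set.Ioo (0:ℝ) 1) :
    Ja a v t = t * (-v 1 / 2) + (1 - t ^ 2) ^ (-a) * wF v L t - 2 * a * t * Gp a v L t := by
  rw [Ja, if_neg ht.1.ne', abs_of_pos ht.1]
  have hcongr : (∫ x in (0:ℝ)..t, x * (1 - x ^ 2) ^ (-(a + 1)) * v x) = Gp a v L t := by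
    refine intervalIntegral.integral_congr_ae ?_
    filter_upwards with x hx
    rw [Set.uIoc_of_le ht.1.le] at hx
    rw [vp, w_eq_pos hx.1]
    ring
  rw [hcongr, w_eq_pos ht.1]
  ring

noncomputable def gT (a : ℝ) (v : ℝ → ℝ) (L : ℝ) (t : ℝ) : ℝ :=
  -v 1 / 2 * (t * (1 - t ^ 2) ^ (a - 1)) - 2 * a * t * (1 - t ^ 2) ^ (a - 1) * Gp a v L t
    + (1 - t ^ 2)⁻¹ * wF v L t

lemma pos_Icc {s : ℝ} (hs1 : s < 1) {x : ℝ} (hx : x ∈ Set.Icc 0 s) : 0 < 1 - x ^ 2 := by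
  nlinarith [hx.1, hx.2]

lemma gT_contOn (hv : MemC v)
    (hL : Tendsto (fun s => |s| * v s) (𝓝[Set.Icc (-1:ℝ) 1 \ {0}] 0) (𝓝 L))
    {s : ℝ} (hs0 : 0 ≤ s) (hs1 : s < 1) : ContinuousOn (gT a v L) (Set.Icc 0 s) := by
  have hb : ContinuousOn (fun x : ℝ => 1 - x ^ 2) (Set.Icc 0 s) :=
    continuousOn_const.sub (continuous_pow 2).continuousOn
  have hw : ContinuousOn (wF v L) (Set.Icc 0 s) := by
    refine (w_contOn hv hL).mono ?_
    intro x hx; exact ⟨by linarith [hx.1], by linarith [hx.2]⟩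
  have hrp : ContinuousOn (fun x : ℝ => (1 - x ^ 2) ^ (a - 1)) (Set.Icc 0 s) :=
    hb.rpow_const fun x hx => Or.inl (pos_Icc hs1 hx).ne'
  refine ContinuousOn.add (ContinuousOn.sub ?_ ?_) ?_
  · exact continuousOn_const.mul ((continuous_id.continuousOn).mul hrp)
  · exact ((continuousOn_const.mul (continuous_id.continuousOn)).mul hrp).mul
      (Gp_contOn hv hL hs0 hs1)
  · exact (hb.inv₀ fun x hx => (pos_Icc hs1 hx).ne').mul hw

lemma Phip_hasDeriv (ha : 0 < a) (hv : MemC v)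
    (hL : Tendsto (fun s => |s| * v s) (𝓝[Set.Icc (-1:ℝ) 1 \ {0}] 0) (𝓝 L))
    {x : ℝ} (hx : x ∈ Set.Ioo (0:ℝ) 1) : HasDerivAt (Phip a v L) (gT a v L x) x := by
  have hxo : x ∈ Set.Ioo (-1:ℝ) 1 := ⟨by linarith [hx.1], hx.2⟩
  have hpos : 0 < 1 - x ^ 2 := one_sub_sq_pos hxo
  have hA := hasDerivAt_pow_a hpos a
  have hG := Gp_hasDeriv (a := a) hv hL hx
  have h := ((hA.sub_const 1).const_mul (v 1 / (4 * a))).add (hA.mul hG)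
  refine h.congr_deriv ?_
  have h1 : (1 - x ^ 2) ^ a * ((1 - x ^ 2) ^ (-(a + 1)) * wF v L x)
      = (1 - x ^ 2)⁻¹ * wF v L x := by
    rw [← mul_assoc, ← Real.rpow_add hpos]
    have he : a + -(a + 1) = -1 := by ring
    rw [he, Real.rpow_neg_one]
  rw [gT]
  simp only [vp]
  rw [h1]
  field_simp
  ring

lemma Phip_contOn (hv : MemC v)
    (hL : Tendsto (fun s => |s| * v s) (𝓝[Set.Icc (-1:ℝ) 1 \ {0}] 0) (𝓝 L))
    {s : ℝ} (hs0 : 0 ≤ s) (hs1 : s < 1) : ContinuousOn (Phip a v L) (Set.Icc 0 s) := by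
  have hb : ContinuousOn (fun x : ℝ => 1 - x ^ 2) (Set.Icc 0 s) :=
    continuousOn_const.sub (continuous_pow 2).continuousOn
  have hrp : ContinuousOn (fun x : ℝ => (1 - x ^ 2) ^ a) (Set.Icc 0 s) :=
    hb.rpow_const fun x hx => Or.inl (pos_Icc hs1 hx).ne'
  exact (continuousOn_const.mul (hrp.sub continuousOn_const)).add
    (hrp.mul (Gp_contOn hv hL hs0 hs1))

lemma posIdentity (ha : 0 < a) (hv : MemC v)
    (hL : Tendsto (fun s => |s| * v s) (𝓝[Set.Icc (-1:ℝ) 1 \ {0}] 0) (𝓝 L))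
    {s : ℝ} (hs0 : 0 ≤ s) (hs1 : s < 1) : DaInt a (Ja a v) s = Phip a v L s := by
  rcases eq_or_lt_of_le hs0 with rfl | hs0'
  · rw [DaInt, intervalIntegral.integral_same, Phip, Gp, intervalIntegral.integral_same]
    norm_num
  have hstep1 : DaInt a (Ja a v) s = ∫ t in (0:ℝ)..s, gT a v L t := by
    refine intervalIntegral.integral_congr_ae ?_
    filter_upwards with x hx
    rw [Set.uIoc_of_le hs0] at hx
    have hxo : x ∈ Set.Ioo (0:ℝ) 1 := ⟨hx.1, lt_of_le_of_lt hx.2 hs1⟩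
    have hpos : 0 < 1 - x ^ 2 := one_sub_sq_pos ⟨by linarith [hxo.1], hxo.2⟩
    rw [Ja_pos hv hL hxo, gT]
    have h1 : (1 - x ^ 2) ^ (a - 1) * (1 - x ^ 2) ^ (-a) = (1 - x ^ 2)⁻¹ := by
      rw [← Real.rpow_add hpos]
      have he : a - 1 + -a = -1 := by ring
      rw [he, Real.rpow_neg_one]
    calc (1 - x ^ 2) ^ (a - 1) * (x * (-v 1 / 2) + (1 - x ^ 2) ^ (-a) * wF v L x
          - 2 * a * x * Gp a v L x)
        = -v 1 / 2 * (x * (1 - x ^ 2) ^ (a - 1))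
          - 2 * a * x * (1 - x ^ 2) ^ (a - 1) * Gp a v L x
          + ((1 - x ^ 2) ^ (a - 1) * (1 - x ^ 2) ^ (-a)) * wF v L x := by ring
      _ = _ := by rw [h1]
  have hftc : ∫ t in (0:ℝ)..s, gT a v L t = Phip a v L s - Phip a v L 0 := by
    refine intervalIntegral.integral_eq_sub_of_hasDeriv_right_of_le hs0
      (Phip_contOn hv hL hs0 hs1) (fun x hx => ?_) ?_
    · exact (Phip_hasDeriv ha hv hL ⟨hx.1, lt_trans hx.2 hs1⟩).hasDerivWithinAt
    · apply ContinuousOn.intervalIntegrable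
      rw [Set.uIcc_of_le hs0]
      exact gT_contOn hv hL hs0 hs1
  have hPhip0 : Phip a v L 0 = 0 := by
    rw [Phip, Gp, intervalIntegral.integral_same]
    norm_num
  rw [hstep1, hftc, hPhip0, sub_zero]

lemma cont_base : Continuous (fun s : ℝ => 1 - s ^ 2) := by
  have : Continuous (fun s : ℝ => s ^ 2) := continuous_pow 2
  exact continuous_const.sub this

lemma tendsto_pow_a_zero (ha : 0 < a) :
    Tendsto (fun s : ℝ => (1 - s ^ 2) ^ a) (𝓝[Set.Ioo (-1:ℝ) 1] 1) (𝓝 0) := by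
  have h1 : Tendsto (fun s : ℝ => 1 - s ^ 2) (𝓝[Set.Ioo (-1:ℝ) 1] 1) (𝓝 0) :=
    (cont_base.tendsto' 1 0 (by norm_num)).mono_left nhdsWithin_le_nhds
  have h2 : ContinuousAt (fun x : ℝ => x ^ a) 0 := Real.continuousAt_rpow_const 0 a (Or.inr ha.le)
  have := h2.tendsto.comp h1
  simpa [Function.comp_def, Real.zero_rpow ha.ne'] using this

lemma tendsto_H (ha : 0 < a) (hv : MemC v)
    (hL : Tendsto (fun s => |s| * v s) (𝓝[Set.Icc (-1:ℝ) 1 \ {0}] 0) (𝓝 L)) :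
    Tendsto (fun s => (1 - s ^ 2) ^ a * Gp a v L s) (𝓝[Set.Ioo (-1:ℝ) 1] 1)
      (𝓝 (v 1 / (2 * a))) := by
  have ha' : a ≠ 0 := ha.ne'
  rw [Metric.tendsto_nhds]
  intro ε hε
  have h1S : (1:ℝ) ∈ Set.Icc (-1:ℝ) 1 \ {0} := by norm_num
  have hv1 : ContinuousWithinAt v (Set.Icc (-1:ℝ) 1 \ {0}) 1 := hv.1 1 h1S
  rw [Metric.continuousWithinAt_iff] at hv1
  obtain ⟨δ, hδ, hδ'⟩ := hv1 (a * ε) (by positivity)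
  obtain ⟨c, hc_def⟩ : ∃ c : ℝ, c = max (1 - δ / 2) (1 / 2) := ⟨_, rfl⟩
  have hc0 : (0:ℝ) < c := by rw [hc_def]; exact lt_of_lt_of_le (by norm_num) (le_max_right _ _)
  have hc1 : c < 1 := by
    rw [hc_def]
    apply max_lt (by linarith) (by norm_num)
  have hcpos : 0 < 1 - c ^ 2 := by nlinarith
  have hclose : ∀ t : ℝ, c ≤ t → t < 1 → |v t - v 1| < a * ε := by
    intro t hct ht1
    have htS : t ∈ Set.Icc (-1:ℝ) 1 \ {0} := by
      refine ⟨⟨by linarith, ht1.le⟩, ?_⟩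
      simp only [Set.mem_singleton_iff]
      intro h; rw [h] at hct; linarith
    have hdist : dist t 1 < δ := by
      rw [Real.dist_eq, abs_of_nonpos (by linarith)]
      have hct' : 1 - δ / 2 ≤ t := le_trans (le_max_left _ _) (hc_def ▸ hct)
      linarith
    have := hδ' htS hdist
    rwa [Real.dist_eq] at this
  obtain ⟨A, hA_def⟩ : ∃ A : ℝ, A = Gp a v L c - v 1 / (2 * a) * (1 - c ^ 2) ^ (-a) := ⟨_, rfl⟩
  have htz := tendsto_pow_a_zero (a := a) ha
  have ev2 : ∀ᶠ s : ℝ in 𝓝[Set.Ioo (-1:ℝ) 1] 1, (1 - s ^ 2) ^ a * |A| < ε / 2 := by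
    have h0 : (0:ℝ) * |A| < ε / 2 := by rw [zero_mul]; exact half_pos hε
    exact (htz.mul_const |A|).eventually_lt_const h0
  have ev1 : ∀ᶠ s : ℝ in 𝓝[Set.Ioo (-1:ℝ) 1] 1, c < s :=
    eventually_nhdsWithin_of_eventually_nhds (eventually_gt_nhds hc1)
  filter_upwards [self_mem_nhdsWithin, ev1, ev2] with s hsI hcs hs2
  have hs1 : s < 1 := hsI.2
  have hspos : 0 < 1 - s ^ 2 := one_sub_sq_pos hsI
  have hPpos : 0 < (1 - s ^ 2) ^ a := Real.rpow_pos_of_pos hspos a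
  have hCpos : 0 < (1 - c ^ 2) ^ (-a) := Real.rpow_pos_of_pos hcpos (-a)
  have hone : (1 - s ^ 2) ^ a * (1 - s ^ 2) ^ (-a) = 1 := rpow_mul_rpow_neg hspos a
  have hi1 : IntervalIntegrable (vp a v L) volume 0 c := vp_intble hv hL hc0.le hc1
  have hi2 : IntervalIntegrable (vp a v L) volume c s := by
    refine (vp_intble hv hL (by linarith : (0:ℝ) ≤ s) hs1).mono_set ?_
    rw [Set.uIcc_of_le hcs.le, Set.uIcc_of_le (by linarith : (0:ℝ) ≤ s)]
    exact Set.Icc_subset_Icc hc0.le le_rfl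
  have hsplit : Gp a v L c + (∫ t in c..s, vp a v L t) = Gp a v L s :=
    intervalIntegral.integral_add_adjacent_intervals hi1 hi2
  have hbase : ∀ x ∈ Set.Icc c s, (0:ℝ) < 1 - x ^ 2 := fun x hx => by nlinarith [hx.1, hx.2]
  have hrpc : ContinuousOn (fun t : ℝ => t * (1 - t ^ 2) ^ (-(a + 1))) (Set.Icc c s) :=
    (continuous_id.continuousOn).mul
      (cont_base.continuousOn.rpow_const fun x hx => Or.inl (hbase x hx).ne')
  have hvcont : ContinuousOn v (Set.Icc c s) := by
    refine hv.1.mono ?_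
    intro x hx
    refine ⟨⟨by linarith [hx.1], by linarith [hx.2]⟩, ?_⟩
    simp only [Set.mem_singleton_iff]
    intro h; rw [h] at hx; exact absurd hx.1 (by linarith)
  have hmid : (∫ t in c..s, vp a v L t)
      = (∫ t in c..s, t * (1 - t ^ 2) ^ (-(a + 1)) * (v t - v 1))
        + v 1 * (1 / (2 * a) * ((1 - s ^ 2) ^ (-a) - (1 - c ^ 2) ^ (-a))) := by
    have hcongr : (∫ t in c..s, vp a v L t)
        = ∫ t in c..s, (t * (1 - t ^ 2) ^ (-(a + 1)) * (v t - v 1)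
            + v 1 * (t * (1 - t ^ 2) ^ (-(a + 1)))) := by
      refine intervalIntegral.integral_congr ?_
      intro x hx
      rw [Set.uIcc_of_le hcs.le] at hx
      have hx0 : 0 < x := lt_of_lt_of_le hc0 hx.1
      simp only [vp, w_eq_pos hx0]
      ring
    have hi3 : IntervalIntegrable (fun t : ℝ => t * (1 - t ^ 2) ^ (-(a + 1)) * (v t - v 1))
        volume c s := by
      apply ContinuousOn.intervalIntegrable
      rw [Set.uIcc_of_le hcs.le]
      exact hrpc.mul (hvcont.sub continuousOn_const)
    have hi4 : IntervalIntegrable (fun t : ℝ => v 1 * (t * (1 - t ^ 2) ^ (-(a + 1))))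
        volume c s := by
      apply ContinuousOn.intervalIntegrable
      rw [Set.uIcc_of_le hcs.le]
      exact continuousOn_const.mul hrpc
    rw [hcongr, intervalIntegral.integral_add hi3 hi4, intervalIntegral.integral_const_mul,
      prim_eq ha hc0 hcs.le hs1]
  obtain ⟨R, hR_def⟩ :
      ∃ R : ℝ, R = ∫ t in c..s, t * (1 - t ^ 2) ^ (-(a + 1)) * (v t - v 1) := ⟨_, rfl⟩
  have hRbound : |R| ≤ |a * ε * (1 / (2 * a) * ((1 - s ^ 2) ^ (-a) - (1 - c ^ 2) ^ (-a)))| := by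
    have hgint : IntervalIntegrable (fun t : ℝ => a * ε * (t * (1 - t ^ 2) ^ (-(a + 1))))
        volume c s := by
      apply ContinuousOn.intervalIntegrable
      rw [Set.uIcc_of_le hcs.le]
      exact continuousOn_const.mul hrpc
    have hae : ∀ᵐ t ∂(volume.restrict (Set.uIoc c s)),
        ‖t * (1 - t ^ 2) ^ (-(a + 1)) * (v t - v 1)‖
          ≤ a * ε * (t * (1 - t ^ 2) ^ (-(a + 1))) := by
      filter_upwards [ae_restrict_mem measurableSet_uIoc] with t ht
      rw [Set.uIoc_of_le hcs.le] at ht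
      have ht0 : 0 < t := lt_trans hc0 ht.1
      have htpos : (0:ℝ) < 1 - t ^ 2 := by nlinarith [ht.1, ht.2, hs1]
      have hrp : (0:ℝ) ≤ t * (1 - t ^ 2) ^ (-(a + 1)) :=
        mul_nonneg ht0.le (Real.rpow_nonneg htpos.le _)
      rw [Real.norm_eq_abs, abs_mul, abs_of_nonneg hrp]
      have hcl := hclose t ht.1.le (lt_of_le_of_lt ht.2 hs1)
      calc t * (1 - t ^ 2) ^ (-(a + 1)) * |v t - v 1|
          ≤ t * (1 - t ^ 2) ^ (-(a + 1)) * (a * ε) :=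
            mul_le_mul_of_nonneg_left hcl.le hrp
        _ = a * ε * (t * (1 - t ^ 2) ^ (-(a + 1))) := by ring
    have h := intervalIntegral.norm_integral_le_abs_of_norm_le hae hgint
    rw [intervalIntegral.integral_const_mul, prim_eq ha hc0 hcs.le hs1, Real.norm_eq_abs,
      ← hR_def] at h
    exact h
  have key : (1 - s ^ 2) ^ a * Gp a v L s - v 1 / (2 * a)
      = (1 - s ^ 2) ^ a * A + (1 - s ^ 2) ^ a * R := by
    have hsum : Gp a v L s = Gp a v L c
        + (R + v 1 * (1 / (2 * a) * ((1 - s ^ 2) ^ (-a) - (1 - c ^ 2) ^ (-a)))) := by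
      rw [← hsplit, hmid, hR_def]
    rw [hsum, hA_def]
    linear_combination (v 1 / (2 * a)) * hone
  rw [Real.dist_eq, key]
  have hPC : (1 - s ^ 2) ^ a * (1 - c ^ 2) ^ (-a) ≤ 1 := by
    have h1 : (1 - s ^ 2) ^ a ≤ (1 - c ^ 2) ^ a := by
      apply Real.rpow_le_rpow hspos.le (by nlinarith) ha.le
    calc (1 - s ^ 2) ^ a * (1 - c ^ 2) ^ (-a)
        ≤ (1 - c ^ 2) ^ a * (1 - c ^ 2) ^ (-a) := mul_le_mul_of_nonneg_right h1 hCpos.le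
      _ = 1 := rpow_mul_rpow_neg hcpos a
  have hPCpos : 0 < (1 - s ^ 2) ^ a * (1 - c ^ 2) ^ (-a) := mul_pos hPpos hCpos
  have hPR : (1 - s ^ 2) ^ a * |R| ≤ ε / 2 := by
    have h3 : (1 - s ^ 2) ^ a
          * (a * ε * (1 / (2 * a) * ((1 - s ^ 2) ^ (-a) - (1 - c ^ 2) ^ (-a))))
        = ε / 2 * ((1 - s ^ 2) ^ a * (1 - s ^ 2) ^ (-a))
          - ε / 2 * ((1 - s ^ 2) ^ a * (1 - c ^ 2) ^ (-a)) := by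
      field_simp
    calc (1 - s ^ 2) ^ a * |R|
        ≤ (1 - s ^ 2) ^ a
            * |a * ε * (1 / (2 * a) * ((1 - s ^ 2) ^ (-a) - (1 - c ^ 2) ^ (-a)))| :=
          mul_le_mul_of_nonneg_left hRbound hPpos.le
      _ = |(1 - s ^ 2) ^ a
            * (a * ε * (1 / (2 * a) * ((1 - s ^ 2) ^ (-a) - (1 - c ^ 2) ^ (-a))))| := by
          rw [abs_mul ((1 - s ^ 2) ^ a)
            (a * ε * (1 / (2 * a) * ((1 - s ^ 2) ^ (-a) - (1 - c ^ 2) ^ (-a)))),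
            abs_of_pos hPpos]
      _ = |ε / 2 - ε / 2 * ((1 - s ^ 2) ^ a * (1 - c ^ 2) ^ (-a))| := by
          rw [h3, hone, mul_one]
      _ ≤ ε / 2 := by
          have e1 : ε / 2 * ((1 - s ^ 2) ^ a * (1 - c ^ 2) ^ (-a)) ≤ ε / 2 * 1 :=
            mul_le_mul_of_nonneg_left hPC (by linarith)
          have e2 : 0 ≤ ε / 2 * ((1 - s ^ 2) ^ a * (1 - c ^ 2) ^ (-a)) :=
            mul_nonneg (by linarith) hPCpos.le
          rw [abs_of_nonneg (by linarith)]
          linarith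
  calc |(1 - s ^ 2) ^ a * A + (1 - s ^ 2) ^ a * R|
      ≤ |(1 - s ^ 2) ^ a * A| + |(1 - s ^ 2) ^ a * R| := abs_add_le _ _
    _ = (1 - s ^ 2) ^ a * |A| + (1 - s ^ 2) ^ a * |R| := by
        rw [abs_mul, abs_mul, abs_of_pos hPpos]
    _ < ε / 2 + ε / 2 := add_lt_add_of_lt_of_le hs2 hPR
    _ = ε := by ring

lemma tendsto_DaInt_right (ha : 0 < a) (hv : MemC v) :
    Tendsto (DaInt a (Ja a v)) (𝓝[Set.Ioo (-1:ℝ) 1] 1) (𝓝 (v 1 / (4 * a))) := by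
  obtain ⟨L, hL⟩ := hv.2.2
  have hPhip : Tendsto (Phip a v L) (𝓝[Set.Ioo (-1:ℝ) 1] 1) (𝓝 (v 1 / (4 * a))) := by
    have h1 := ((tendsto_pow_a_zero (a := a) ha).sub_const 1).const_mul (v 1 / (4 * a))
    have h2 := ((tendsto_pow_a_zero (a := a) ha).mul (tendsto_H ha hv hL)).congr
      (fun s => rfl)
    have h3 := h1.add (tendsto_H ha hv hL)
    have he : v 1 / (4 * a) * (0 - 1) + v 1 / (2 * a) = v 1 / (4 * a) := by
      field_simp
      ring
    rw [he] at h3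
    exact h3
  refine hPhip.congr' ?_
  have ev1 : ∀ᶠ s : ℝ in 𝓝[Set.Ioo (-1:ℝ) 1] 1, (0:ℝ) < s :=
    eventually_nhdsWithin_of_eventually_nhds (eventually_gt_nhds one_pos)
  filter_upwards [self_mem_nhdsWithin, ev1] with s hsI hs0
  exact (posIdentity ha hv hL hs0.le hsI.2).symm

lemma S_neg : ∀ x ∈ Set.Icc (-1:ℝ) 1 \ {0}, -x ∈ Set.Icc (-1:ℝ) 1 \ {0} := by
  intro x hx
  refine ⟨⟨by linarith [hx.1.2], by linarith [hx.1.1]⟩, ?_⟩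
  simp only [Set.mem_singleton_iff, neg_eq_zero]
  exact hx.2

lemma memC_neg (hv : MemC v) : MemC (fun t => v (-t)) := by
  refine ⟨?_, ?_, ?_⟩
  · exact hv.1.comp (continuous_neg.continuousOn) S_neg
  · simpa using hv.2.1.symm
  · obtain ⟨M, hM⟩ := hv.2.2
    refine ⟨M, ?_⟩
    have hneg : Tendsto (fun t : ℝ => -t) (𝓝[Set.Icc (-1:ℝ) 1 \ {0}] 0)
        (𝓝[Set.Icc (-1:ℝ) 1 \ {0}] 0) := by
      rw [tendsto_nhdsWithin_iff]
      constructor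
      · simpa using (continuous_neg.tendsto (0:ℝ)).mono_left nhdsWithin_le_nhds
      · filter_upwards [self_mem_nhdsWithin] with x hx using S_neg x hx
    have := hM.comp hneg
    simpa [Function.comp_def, abs_neg] using this

lemma Ja_negpt (hv : MemC v) {s : ℝ} (hs : s ≠ 0) :
    Ja a v (-s) = Ja a (fun t => v (-t)) s := by
  rw [Ja, if_neg (neg_ne_zero.2 hs), Ja, if_neg hs]
  have hint : (∫ t in (0:ℝ)..(-s), t * (1 - t ^ 2) ^ (-(a + 1)) * v t)
      = ∫ x in (0:ℝ)..s, x * (1 - x ^ 2) ^ (-(a + 1)) * v (-x) := by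
    have h := intervalIntegral.integral_comp_neg
      (fun t : ℝ => t * (1 - t ^ 2) ^ (-(a + 1)) * v t) (a := 0) (b := s)
    rw [neg_zero] at h
    rw [intervalIntegral.integral_symm (-s) 0, ← h, ← intervalIntegral.integral_neg]
    refine intervalIntegral.integral_congr fun x _ => ?_
    rw [neg_sq]
    ring
  rw [hint, hv.2.1, abs_neg, neg_sq]

lemma DaInt_neg (hv : MemC v) (s : ℝ) :
    DaInt a (Ja a v) (-s) = -(DaInt a (Ja a (fun t => v (-t))) s) := by
  rw [DaInt, DaInt]
  have h := intervalIntegral.integral_comp_neg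
    (fun t : ℝ => (1 - t ^ 2) ^ (a - 1) * Ja a v t) (a := 0) (b := s)
  rw [neg_zero] at h
  rw [intervalIntegral.integral_symm, ← h]
  rw [neg_inj]
  refine intervalIntegral.integral_congr_ae ?_
  filter_upwards [ae_ne_zero] with x hx0 hxI
  rw [neg_sq, Ja_negpt hv hx0]

lemma tendsto_DaInt_left (ha : 0 < a) (hv : MemC v) :
    Tendsto (DaInt a (Ja a v)) (𝓝[Set.Ioo (-1:ℝ) 1] (-1)) (𝓝 (-(v 1 / (4 * a)))) := by
  have hv' : MemC (fun t => v (-t)) := memC_neg hv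
  have h := tendsto_DaInt_right ha hv'
  rw [show v (-1) = v 1 from hv.2.1.symm] at h
  have hmap : Tendsto (fun s : ℝ => -s) (𝓝[Set.Ioo (-1:ℝ) 1] (-1))
      (𝓝[Set.Ioo (-1:ℝ) 1] 1) := by
    rw [nhdsWithin, nhdsWithin]
    refine Tendsto.inf ?_ (tendsto_principal_principal.2 ?_)
    · simpa using (continuous_neg.tendsto (-1:ℝ))
    · intro x hx
      exact ⟨by linarith [hx.2], by linarith [hx.1]⟩
  have hcomp := h.comp hmap
  have heq : ∀ s : ℝ, DaInt a (Ja a (fun t => v (-t))) (-s) = -(DaInt a (Ja a v) s) := by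
    intro s
    have := DaInt_neg (a := a) (v := fun t => v (-t)) hv' s
    have hfun : (fun t => v (- -t)) = v := by funext t; rw [neg_neg]
    rw [hfun] at this
    exact this
  have : Tendsto (fun s : ℝ => -(DaInt a (Ja a v) s)) (𝓝[Set.Ioo (-1:ℝ) 1] (-1))
      (𝓝 (v 1 / (4 * a))) := by
    refine hcomp.congr fun s => ?_
    simp only [Function.comp_apply]
    exact heq s
  have := this.neg
  simpa using this

lemma neBot_one : (𝓝[Set.Ioo (-1:ℝ) 1] (1:ℝ)).NeBot := by
  refine mem_closure_iff_nhdsWithin_neBot.mp ?_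
  rw [closure_Ioo (by norm_num : (-1:ℝ) ≠ 1)]
  norm_num

lemma neBot_negOne : (𝓝[Set.Ioo (-1:ℝ) 1] (-1:ℝ)).NeBot := by
  refine mem_closure_iff_nhdsWithin_neBot.mp ?_
  rw [closure_Ioo (by norm_num : (-1:ℝ) ≠ 1)]
  norm_num

lemma DaIntE_one (ha : 0 < a) (hv : MemC v) : DaIntE a (Ja a v) 1 = v 1 / (4 * a) := by
  rw [DaIntE, if_neg (by norm_num), DaLim]
  have := neBot_one
  exact (tendsto_DaInt_right ha hv).limUnder_eq

lemma DaIntE_negOne (ha : 0 < a) (hv : MemC v) :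
    DaIntE a (Ja a v) (-1) = -(v 1 / (4 * a)) := by
  rw [DaIntE, if_neg (by norm_num), DaLim]
  have := neBot_negOne
  exact (tendsto_DaInt_left ha hv).limUnder_eq

lemma core (ha : 0 < a) {r c1 G vr P Q : ℝ} (hr : r ≠ 0) (hPQ : P * Q = 1) :
    r⁻¹ * P * (r * (-c1 / 2) + Q * (r * vr) - 2 * a * r * G)
      + 2 * a * ((c1 / (4 * a) * (P - 1) + P * G) - -(c1 / (4 * a))) = vr := by
  have ha' : a ≠ 0 := ha.ne'
  field_simp
  linear_combination (8 * vr) * hPQ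

end IaJa

open IaJa in
/-- For every `u ∈ 𝒞`, `I_a(J_a(u)) = u` on `[-1,1] \ {0}`. -/
theorem Ia_Ja (a : ℝ) (ha : 0 < a) (u : ℝ → ℝ) (hu : MemC u) :
    ∀ s ∈ Set.Icc (-1:ℝ) 1 \ {0}, Ia a (Ja a u) s = u s := by
  intro s hs
  have ha' : a ≠ 0 := ha.ne'
  obtain ⟨L, hL⟩ := hu.2.2
  obtain ⟨⟨hsl, hsr⟩, hs0⟩ := hs
  have hs0' : s ≠ 0 := hs0
  rcases eq_or_lt_of_le hsr with rfl | hs1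
  · -- s = 1
    rw [Ia, Real.sign_one, DaIntE_one ha hu, DaIntE_negOne ha hu]
    have h0 : (1 - (1:ℝ) ^ 2) = 0 := by norm_num
    rw [h0, Real.zero_rpow ha']
    field_simp
    ring
  rcases eq_or_lt_of_le hsl with rfl | hsl'
  · -- s = -1
    rw [Ia, Real.sign_of_neg (by norm_num : (-1:ℝ) < 0), neg_neg,
      DaIntE_one ha hu, DaIntE_negOne ha hu]
    have h0 : (1 - (-1:ℝ) ^ 2) = 0 := by norm_num
    rw [h0, Real.zero_rpow ha', show u (-1) = u 1 from hu.2.1.symm]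
    field_simp
    ring
  have hsIoo : s ∈ Set.Ioo (-1:ℝ) 1 := ⟨hsl', hs1⟩
  have hone := rpow_mul_rpow_neg (one_sub_sq_pos hsIoo) a
  rcases lt_or_gt_of_ne hs0' with hneg | hpos
  · -- -1 < s < 0
    obtain ⟨L', hL'⟩ := (memC_neg hu).2.2
    have hv' := memC_neg hu
    have hr : (0:ℝ) < -s := by linarith
    have hr1 : -s < 1 := by linarith
    have hJ : Ja a u s = -s * (-u 1 / 2) + (1 - s ^ 2) ^ (-a) * (-s * u s)
        - 2 * a * -s * Gp a (fun t => u (-t)) L' (-s) := by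
      have h1 : Ja a u s = Ja a (fun t => u (-t)) (-s) := by
        have := Ja_negpt (a := a) hu (s := -s) hr.ne'
        rwa [neg_neg] at this
      rw [h1, Ja_pos hv' hL' ⟨hr, hr1⟩, w_eq_pos hr]
      simp only [neg_neg, neg_sq]
      rw [show u (-1) = u 1 from hu.2.1.symm]
    have hDa : DaInt a (Ja a u) s = -(u 1 / (4 * a) * ((1 - s ^ 2) ^ a - 1)
        + (1 - s ^ 2) ^ a * Gp a (fun t => u (-t)) L' (-s)) := by
      have h2 : DaInt a (Ja a u) s = -(DaInt a (Ja a (fun t => u (-t))) (-s)) := by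
        have := DaInt_neg (a := a) hu (-s)
        rwa [neg_neg] at this
      rw [h2, posIdentity ha hv' hL' hr.le hr1, Phip]
      simp only [neg_neg, neg_sq]
      rw [show u (-1) = u 1 from hu.2.1.symm]
    rw [Ia, Real.sign_of_neg hneg, neg_neg, DaIntE_one ha hu, DaIntE,
      if_pos hsIoo, hDa, hJ]
    have hc := core (a := a) ha (r := -s) (c1 := u 1)
      (G := Gp a (fun t => u (-t)) L' (-s)) (vr := u s)
      (P := (1 - s ^ 2) ^ a) (Q := (1 - s ^ 2) ^ (-a)) (neg_ne_zero.2 hs0') hone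
    linear_combination hc
  · -- 0 < s < 1
    rw [Ia, Real.sign_of_pos hpos, DaIntE_negOne ha hu, DaIntE, if_pos hsIoo,
      posIdentity ha hu hL hpos.le hs1, Phip, Ja_pos hu hL ⟨hpos, hs1⟩, w_eq_pos hpos]
    have hc := core (a := a) ha (r := s) (c1 := u 1) (G := Gp a u L s) (vr := u s)
      (P := (1 - s ^ 2) ^ a) (Q := (1 - s ^ 2) ^ (-a)) hs0' hone
    linear_combination hc

end IaJaProof
end

section
/- Let 1 ≤ j ≤ n-1 and let μ ∈ Val_j(ℝⁿ) be a continuous, translation invariant, j-homogeneous valuation. Define φ_μ(s) = μ(C_{√(1-s²)/s}) for s ∈ [-1,1]\{0}, where C_h = conv(𝔻^{n-1} ∪ {heₙ}). Then: (1) φ_μ is continuous on [-1,1]\{0}; (2) φ_μ(1) = φ_μ(-1); (3) the limit lim_{s→0}|s|φ_μ(s) exists and equals [μ(𝔻^{n-1}×[0,1]) - μ(𝔻^{n-1})]/j; and (4) moreover sup_{s≠0}|s||φ_μ(s)| ≤ 2^j ‖μ‖ · sup_{t∈(0,1]} (1+(1-t)^j)·t/(1-(1-t)^j), which is finite. -/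
open Filter Topology MeasureTheory Metric Set
open scoped RealInnerProductSpace ENNReal Pointwise

noncomputable section

/-- A convex body: a nonempty compact convex subset of `ℝⁿ`. -/
def IsConvexBody {n : ℕ} (K : Set (EuclideanSpace ℝ (Fin n))) : Prop :=
  Convex ℝ K ∧ IsCompact K ∧ K.Nonempty

/-- The last coordinate index of `Fin n`. -/
def lastIdx (n : ℕ) (hn : 0 < n) : Fin n := ⟨n - 1, Nat.sub_lt hn one_pos⟩

/-- The unit disk `𝔻^{n-1} = {x ∈ ℝⁿ : |x| ≤ 1, xₙ = 0}`. -/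
def diskSet (n : ℕ) (hn : 0 < n) : Set (EuclideanSpace ℝ (Fin n)) :=
  {x | ‖x‖ ≤ 1 ∧ x (lastIdx n hn) = 0}

/-- The cone `C_h = conv(𝔻^{n-1} ∪ {h eₙ})`. -/
def coneSet (n : ℕ) (hn : 0 < n) (h : ℝ) : Set (EuclideanSpace ℝ (Fin n)) :=
  convexHull ℝ (diskSet n hn ∪ {h • EuclideanSpace.single (lastIdx n hn) (1:ℝ)})

/-- The support function `h_K(v) = sup_{x ∈ K} ⟨x, v⟩`. -/
def suppFn {n : ℕ} (K : Set (EuclideanSpace ℝ (Fin n))) (v : EuclideanSpace ℝ (Fin n)) : ℝ :=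
  sSup ((fun x => (inner ℝ x v : ℝ)) '' K)

end

noncomputable section

namespace PhiMu

variable (n : ℕ) (hn : 0 < n)

abbrev E := EuclideanSpace ℝ (Fin n)

def ee : E n := EuclideanSpace.single (lastIdx n hn) (1:ℝ)

lemma norm_ee : ‖ee n hn‖ = 1 := by
  simp [ee, EuclideanSpace.norm_single]

lemma ee_apply : ee n hn (lastIdx n hn) = 1 := by
  simp [ee, EuclideanSpace.single_apply]

lemma zero_mem_disk : (0 : E n) ∈ diskSet n hn := by
  simp [diskSet]

lemma disk_nonempty : (diskSet n hn).Nonempty := ⟨0, zero_mem_disk n hn⟩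

lemma disk_subset_ball : diskSet n hn ⊆ closedBall 0 1 := fun x hx => by
  simpa [mem_closedBall, dist_eq_norm] using hx.1

lemma disk_convex : Convex ℝ (diskSet n hn) := by
  intro x hx y hy a b ha hb hab
  refine ⟨?_, ?_⟩
  · calc ‖a • x + b • y‖ ≤ ‖a • x‖ + ‖b • y‖ := norm_add_le _ _
      _ = a * ‖x‖ + b * ‖y‖ := by rw [norm_smul, norm_smul, Real.norm_of_nonneg ha,
          Real.norm_of_nonneg hb]
      _ ≤ a * 1 + b * 1 := by gcongr; exacts [hx.1, hy.1]
      _ = 1 := by linarith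
  · have : (a • x + b • y) (lastIdx n hn) = a * x (lastIdx n hn) + b * y (lastIdx n hn) := rfl
    rw [this, hx.2, hy.2]; ring

lemma disk_isClosed : IsClosed (diskSet n hn) := by
  have h1 : IsClosed {x : E n | ‖x‖ ≤ 1} := isClosed_le (continuous_norm) continuous_const
  have h2 : IsClosed {x : E n | x (lastIdx n hn) = 0} :=
    isClosed_eq (PiLp.proj (𝕜 := ℝ) 2 (fun _ : Fin n => ℝ) (lastIdx n hn)).continuous
      continuous_const
  exact h1.inter h2

lemma disk_isCompact : IsCompact (diskSet n hn) :=
  (isCompact_closedBall (0 : E n) 1).of_isClosed_subset (disk_isClosed n hn)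
    (disk_subset_ball n hn)

lemma disk_body : IsConvexBody (diskSet n hn) :=
  ⟨disk_convex n hn, disk_isCompact n hn, disk_nonempty n hn⟩

/-- The parametrization of the cone. -/
def pt (h : ℝ) (p : E n × ℝ) : E n := (1 - p.2) • p.1 + (p.2 * h) • ee n hn

lemma continuous_pt (h : ℝ) : Continuous (pt n hn h) := by
  unfold pt
  fun_prop

lemma coneSet_eq : coneSet n hn h = pt n hn h '' (diskSet n hn ×ˢ Icc (0:ℝ) 1) := by
  rw [coneSet, convexHull_union (disk_nonempty n hn) (singleton_nonempty _),
    (disk_convex n hn).convexHull_eq, convexHull_singleton, convexJoin_singleton_right]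
  ext x
  simp only [mem_iUnion, mem_image, mem_prod, mem_Icc]
  constructor
  · rintro ⟨d, hd, hx⟩
    rw [segment_eq_image'] at hx
    obtain ⟨t, ht, rfl⟩ := hx
    refine ⟨(d, t), ⟨hd, ht⟩, ?_⟩
    simp only [pt, ee]
    module
  · rintro ⟨⟨d, t⟩, ⟨hd, ht⟩, rfl⟩
    refine ⟨d, hd, ?_⟩
    rw [segment_eq_image']
    exact ⟨t, ht, by simp only [pt, ee]; module⟩

end PhiMu

namespace Chunk2
open PhiMu
variable (n : ℕ) (hn : 0 < n)

lemma pt_apply_last (h t : ℝ) (d : E n) (hd : d ∈ diskSet n hn) :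
    pt n hn h (d, t) (lastIdx n hn) = t * h := by
  have : pt n hn h (d, t) (lastIdx n hn)
      = (1 - t) * d (lastIdx n hn) + (t * h) * (ee n hn) (lastIdx n hn) := rfl
  rw [this, hd.2, ee_apply]; ring

lemma norm_pt_le (h t : ℝ) (d : E n) (hd : d ∈ diskSet n hn) (ht : t ∈ Icc (0:ℝ) 1) :
    ‖pt n hn h (d, t)‖ ≤ 1 + t * |h| := by
  calc ‖(1 - t) • d + (t * h) • ee n hn‖ ≤ ‖(1 - t) • d‖ + ‖(t * h) • ee n hn‖ := norm_add_le _ _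
    _ = (1 - t) * ‖d‖ + (t * |h|) * 1 := by
        rw [norm_smul, norm_smul, Real.norm_of_nonneg (by linarith [ht.2]), norm_ee,
          Real.norm_eq_abs, abs_mul, abs_of_nonneg ht.1]
    _ ≤ (1 - t) * 1 + t * |h| := by
        have := ht.1; have := ht.2
        have : (1 - t) * ‖d‖ ≤ (1 - t) * 1 := by
          apply mul_le_mul_of_nonneg_left hd.1; linarith
        linarith
    _ ≤ 1 + t * |h| := by nlinarith [ht.1, ht.2]

/-- The truncated cone `D_{h,ε}` (parametrized by t ∈ [0, ε]). -/
def trunc (h ε : ℝ) : Set (E n) := pt n hn h '' (diskSet n hn ×ˢ Icc (0:ℝ) ε)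

lemma trunc_one (h : ℝ) : trunc n hn h 1 = coneSet n hn h := (coneSet_eq n hn).symm

lemma trunc_isCompact (h ε : ℝ) : IsCompact (trunc n hn h ε) :=
  (((disk_isCompact n hn).prod isCompact_Icc)).image (continuous_pt n hn h)

lemma trunc_nonempty (h ε : ℝ) (hε : 0 ≤ ε) : (trunc n hn h ε).Nonempty := by
  refine ⟨pt n hn h (0, 0), ⟨(0, 0), ⟨zero_mem_disk n hn, ?_⟩, rfl⟩⟩
  exact mem_Icc.2 ⟨le_rfl, hε⟩

lemma trunc_convex (h ε : ℝ) (hε1 : ε ≤ 1) : Convex ℝ (trunc n hn h ε) := by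
  rintro x ⟨⟨d, t⟩, ⟨hd, ht⟩, rfl⟩ y ⟨⟨d', t'⟩, ⟨hd', ht'⟩, rfl⟩ a b ha hb hab
  replace hd : d ∈ diskSet n hn := hd
  replace hd' : d' ∈ diskSet n hn := hd'
  replace ht : t ∈ Icc (0:ℝ) ε := ht
  replace ht' : t' ∈ Icc (0:ℝ) ε := ht'
  obtain rfl : b = 1 - a := by linarith
  simp only [mem_Icc] at ht ht'
  have ht1 : t ≤ 1 := ht.2.trans hε1
  have ht'1 : t' ≤ 1 := ht'.2.trans hε1
  obtain ⟨t'', htdef⟩ : ∃ x : ℝ, x = a * t + (1 - a) * t' := ⟨_, rfl⟩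
  have ht''0 : 0 ≤ t'' := by rw [htdef]; nlinarith
  have ht''ε : t'' ≤ ε := by rw [htdef]; nlinarith [ht.2, ht'.2]
  have ht''1 : t'' ≤ 1 := by rw [htdef]; nlinarith
  by_cases h1 : t'' = 1
  · -- degenerate tip case
    have hu : 0 ≤ a * (1 - t) := by nlinarith
    have hv : 0 ≤ (1 - a) * (1 - t') := by nlinarith
    have huv : a * (1 - t) + (1 - a) * (1 - t') = 0 := by
      rw [htdef] at h1; nlinarith
    have e1 : (a * (1 - t)) • d = (0:ℝ) • d := by rw [show a * (1-t) = 0 by linarith]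
    have e2 : ((1 - a) * (1 - t')) • d' = (0:ℝ) • d' := by
      rw [show (1 - a) * (1 - t') = 0 by linarith]
    refine ⟨(d, t''), ⟨hd, ht''0, ht''ε⟩, ?_⟩
    simp only [pt]
    have expand : a • ((1 - t) • d + (t * h) • ee n hn)
          + (1 - a) • ((1 - t') • d' + (t' * h) • ee n hn)
        = (a * (1 - t)) • d + ((1 - a) * (1 - t')) • d'
          + ((a * t + (1 - a) * t') * h) • ee n hn := by module
    rw [expand, e1, e2, ← htdef, h1]
    module
  · have h1' : t'' < 1 := lt_of_le_of_ne ht''1 h1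
    have hpos : (0:ℝ) < 1 - t'' := by linarith
    obtain ⟨d'', hd''def⟩ : ∃ x : E n,
        x = (1 - t'')⁻¹ • ((a * (1 - t)) • d + ((1 - a) * (1 - t')) • d') := ⟨_, rfl⟩
    have hsumle : ‖(a * (1 - t)) • d + ((1 - a) * (1 - t')) • d'‖ ≤ 1 - t'' := by
      calc ‖(a * (1 - t)) • d + ((1 - a) * (1 - t')) • d'‖
          ≤ ‖(a * (1 - t)) • d‖ + ‖((1 - a) * (1 - t')) • d'‖ := norm_add_le _ _
        _ = (a * (1 - t)) * ‖d‖ + ((1 - a) * (1 - t')) * ‖d'‖ := by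
            rw [norm_smul, norm_smul, Real.norm_of_nonneg (by nlinarith),
              Real.norm_of_nonneg (by nlinarith)]
        _ ≤ (a * (1 - t)) * 1 + ((1 - a) * (1 - t')) * 1 := by
            gcongr <;> first | nlinarith | exact hd.1 | exact hd'.1
        _ = 1 - t'' := by rw [htdef]; ring
    have hd''D : d'' ∈ diskSet n hn := by
      constructor
      · rw [hd''def, norm_smul, Real.norm_of_nonneg (inv_nonneg.2 hpos.le)]
        calc (1 - t'')⁻¹ * ‖(a * (1 - t)) • d + ((1 - a) * (1 - t')) • d'‖
            ≤ (1 - t'')⁻¹ * (1 - t'') := mul_le_mul_of_nonneg_left hsumle (inv_nonneg.2 hpos.le)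
          _ = 1 := inv_mul_cancel₀ (ne_of_gt hpos)
      · have e : d'' (lastIdx n hn) = (1 - t'')⁻¹ * ((a * (1 - t)) * d (lastIdx n hn)
            + ((1 - a) * (1 - t')) * d' (lastIdx n hn)) := by rw [hd''def]; rfl
        rw [e, hd.2, hd'.2]; ring
    refine ⟨(d'', t''), ⟨hd''D, ht''0, ht''ε⟩, ?_⟩
    simp only [pt]
    have key : (1 - t'') • d'' = (a * (1 - t)) • d + ((1 - a) * (1 - t')) • d' := by
      rw [hd''def, smul_smul, mul_inv_cancel₀ (ne_of_gt hpos), one_smul]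
    have expand : a • ((1 - t) • d + (t * h) • ee n hn)
          + (1 - a) • ((1 - t') • d' + (t' * h) • ee n hn)
        = ((a * (1 - t)) • d + ((1 - a) * (1 - t')) • d')
          + ((a * t + (1 - a) * t') * h) • ee n hn := by module
    rw [expand, ← key, ← htdef]

lemma trunc_body (h ε : ℝ) (hε : 0 ≤ ε) (hε1 : ε ≤ 1) : IsConvexBody (trunc n hn h ε) :=
  ⟨trunc_convex n hn h ε hε1, trunc_isCompact n hn h ε, trunc_nonempty n hn h ε hε⟩

lemma cone_body (h : ℝ) : IsConvexBody (coneSet n hn h) := by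
  rw [← trunc_one]
  exact trunc_body n hn h 1 zero_le_one le_rfl

end Chunk2

namespace Chunk3
open PhiMu Chunk2
variable (n : ℕ) (hn : 0 < n)

lemma body_smul (c : ℝ) (K : Set (E n)) (hK : IsConvexBody K) : IsConvexBody (c • K) :=
  ⟨hK.1.smul c, by rw [← Set.image_smul]; exact hK.2.1.image (continuous_const_smul c),
    hK.2.2.smul_set⟩

lemma body_translate (w : E n) (K : Set (E n)) (hK : IsConvexBody K) :
    IsConvexBody ((fun y => w + y) '' K) :=
  ⟨hK.1.translate w, hK.2.1.image (continuous_const_vadd w), hK.2.2.image _⟩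

/-- The upper part `B` of the cone. -/
def Bset (h ε : ℝ) : Set (E n) :=
  (fun y => (ε * h) • ee n hn + y) '' ((1 - ε) • coneSet n hn h)

/-- The middle slice. -/
def midSet (h ε : ℝ) : Set (E n) :=
  (fun y => (ε * h) • ee n hn + y) '' ((1 - ε) • diskSet n hn)

lemma Bset_eq_param (h ε : ℝ) (hε0 : 0 ≤ ε) (hε1 : ε ≤ 1) :
    Bset n hn h ε = pt n hn h '' (diskSet n hn ×ˢ Icc ε 1) := by
  ext x
  constructor
  · rintro ⟨y, hy, rfl⟩
    obtain ⟨z, hz, rfl⟩ := hy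
    rw [coneSet_eq] at hz
    obtain ⟨⟨d, t⟩, ⟨hd, ht⟩, rfl⟩ := hz
    replace hd : d ∈ diskSet n hn := hd
    replace ht : t ∈ Icc (0:ℝ) 1 := ht
    refine ⟨(d, ε + (1 - ε) * t), ⟨hd, ?_, ?_⟩, ?_⟩
    · show ε ≤ ε + (1 - ε) * t
      nlinarith [ht.1, ht.2]
    · show ε + (1 - ε) * t ≤ 1
      nlinarith [ht.1, ht.2]
    · simp only [pt]
      module
  · rintro ⟨⟨d, t'⟩, ⟨hd, ht'⟩, rfl⟩
    replace hd : d ∈ diskSet n hn := hd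
    replace ht' : t' ∈ Icc ε 1 := ht'
    by_cases hε : ε = 1
    · subst hε
      obtain rfl : t' = 1 := le_antisymm ht'.2 ht'.1
      refine ⟨0, ?_, ?_⟩
      · rw [show (1:ℝ) - 1 = 0 by ring, zero_smul_set ((cone_body n hn h).2.2)]
        rfl
      · simp only [pt]
        module
    · have hlt : ε < 1 := lt_of_le_of_ne hε1 hε
      have hne : (1:ℝ) - ε ≠ 0 := by linarith
      refine ⟨(1 - ε) • pt n hn h (d, (t' - ε) / (1 - ε)), ⟨pt n hn h (d, (t' - ε) / (1 - ε)),
        ?_, rfl⟩, ?_⟩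
      · rw [coneSet_eq]
        refine ⟨(d, (t' - ε) / (1 - ε)), ⟨hd, ?_, ?_⟩, rfl⟩
        · apply div_nonneg (by linarith [ht'.1]) (by linarith)
        · rw [div_le_one (by linarith)]; linarith [ht'.2]
      · simp only [pt]
        match_scalars <;> field_simp <;> ring

lemma midSet_eq_param (h ε : ℝ) :
    midSet n hn h ε = pt n hn h '' (diskSet n hn ×ˢ {ε}) := by
  ext x
  constructor
  · rintro ⟨y, ⟨d, hd, rfl⟩, rfl⟩
    refine ⟨(d, ε), ⟨hd, rfl⟩, ?_⟩
    simp only [pt]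
    module
  · rintro ⟨⟨d, t⟩, ⟨hd, ht⟩, rfl⟩
    replace hd : d ∈ diskSet n hn := hd
    obtain rfl : ε = t := (show t = ε from ht).symm
    exact ⟨(1 - ε) • d, ⟨d, hd, rfl⟩, by simp only [pt]; module⟩

lemma trunc_union_Bset (h ε : ℝ) (hε0 : 0 ≤ ε) (hε1 : ε ≤ 1) :
    trunc n hn h ε ∪ Bset n hn h ε = coneSet n hn h := by
  rw [Bset_eq_param n hn h ε hε0 hε1, trunc, ← image_union, ← prod_union,
    Icc_union_Icc_eq_Icc hε0 hε1, coneSet_eq]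

lemma trunc_inter_Bset (h ε : ℝ) (hh : h ≠ 0) (hε0 : 0 ≤ ε) (hε1 : ε ≤ 1) :
    trunc n hn h ε ∩ Bset n hn h ε = midSet n hn h ε := by
  rw [Bset_eq_param n hn h ε hε0 hε1, midSet_eq_param]
  ext x
  constructor
  · rintro ⟨⟨⟨d, t⟩, ⟨hd, ht⟩, rfl⟩, ⟨⟨d', t'⟩, ⟨hd', ht'⟩, hx⟩⟩
    replace hd : d ∈ diskSet n hn := hd
    replace hd' : d' ∈ diskSet n hn := hd'
    replace ht : t ∈ Icc (0:ℝ) ε := ht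
    replace ht' : t' ∈ Icc ε 1 := ht'
    have hcoord : t' * h = t * h := by
      rw [← pt_apply_last n hn h t d hd, ← pt_apply_last n hn h t' d' hd', hx]
    have htt' : t = t' := by
      exact (mul_right_cancel₀ hh hcoord).symm
    have : t = ε := le_antisymm ht.2 (htt' ▸ ht'.1)
    exact ⟨(d, t), ⟨hd, by rw [this]; rfl⟩, rfl⟩
  · rintro ⟨⟨d, t⟩, ⟨hd, ht⟩, rfl⟩
    replace hd : d ∈ diskSet n hn := hd
    obtain rfl : ε = t := (show t = ε from ht).symm
    exact ⟨⟨(d, ε), ⟨hd, right_mem_Icc.2 hε0⟩, rfl⟩, ⟨(d, ε), ⟨hd, left_mem_Icc.2 hε1⟩, rfl⟩⟩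

lemma Bset_body (h ε : ℝ) (hε0 : 0 ≤ ε) (hε1 : ε ≤ 1) : IsConvexBody (Bset n hn h ε) :=
  body_translate n _ _ (body_smul n _ _ (cone_body n hn h))

lemma midSet_body (h ε : ℝ) : IsConvexBody (midSet n hn h ε) :=
  body_translate n _ _ (body_smul n _ _ (disk_body n hn))

section Valuation
variable {n} (j : ℕ)
variable (μ : Set (EuclideanSpace ℝ (Fin n)) → ℝ)
variable (hval : ∀ K L : Set (EuclideanSpace ℝ (Fin n)), IsConvexBody K → IsConvexBody L →
      Convex ℝ (K ∪ L) → μ K + μ L = μ (K ∪ L) + μ (K ∩ L))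
variable (htrans : ∀ (x : EuclideanSpace ℝ (Fin n)) (K : Set (EuclideanSpace ℝ (Fin n))),
      IsConvexBody K → μ ((fun y => x + y) '' K) = μ K)
variable (hhom : ∀ (t : ℝ) (K : Set (EuclideanSpace ℝ (Fin n))), 0 ≤ t → IsConvexBody K →
      μ (t • K) = t ^ j * μ K)

include hval htrans hhom in
/-- The key valuation identity. -/
lemma mu_trunc_eq (h ε : ℝ) (hh : h ≠ 0) (hε0 : 0 ≤ ε) (hε1 : ε ≤ 1) :
    μ (trunc n hn h ε)
      = (1 - (1 - ε) ^ j) * μ (coneSet n hn h) + (1 - ε) ^ j * μ (diskSet n hn) := by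
  have h1ε : (0:ℝ) ≤ 1 - ε := by linarith
  have hBμ : μ (Bset n hn h ε) = (1 - ε) ^ j * μ (coneSet n hn h) := by
    rw [Bset, htrans _ _ (body_smul n _ _ (cone_body n hn h)),
      hhom _ _ h1ε (cone_body n hn h)]
  have hMμ : μ (midSet n hn h ε) = (1 - ε) ^ j * μ (diskSet n hn) := by
    rw [midSet, htrans _ _ (body_smul n _ _ (disk_body n hn)),
      hhom _ _ h1ε (disk_body n hn)]
  have hv := hval _ _ (trunc_body n hn h ε hε0 hε1) (Bset_body n hn h ε hε0 hε1)
    (by rw [trunc_union_Bset n hn h ε hε0 hε1]; exact (cone_body n hn h).1)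
  rw [trunc_union_Bset n hn h ε hε0 hε1, trunc_inter_Bset n hn h ε hh hε0 hε1, hBμ, hMμ] at hv
  linarith

end Valuation
end Chunk3

namespace Chunk4
open PhiMu Chunk2 Chunk3
variable (n : ℕ) (hn : 0 < n)

lemma hausdorff_image_le {α : Type*} (f g : α → E n) (S : Set α)
    (r : ℝ) (hr : 0 ≤ r) (hfg : ∀ p ∈ S, dist (f p) (g p) ≤ r) :
    hausdorffDist (f '' S) (g '' S) ≤ r := by
  apply hausdorffDist_le_of_mem_dist hr
  · rintro x ⟨p, hp, rfl⟩
    exact ⟨g p, mem_image_of_mem g hp, hfg p hp⟩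
  · rintro y ⟨p, hp, rfl⟩
    exact ⟨f p, mem_image_of_mem f hp, by rw [dist_comm]; exact hfg p hp⟩

lemma cone_hausdorff_le (h h' : ℝ) :
    hausdorffDist (coneSet n hn h) (coneSet n hn h') ≤ |h - h'| := by
  rw [coneSet_eq, coneSet_eq]
  refine hausdorff_image_le n _ _ _ _ (abs_nonneg _) ?_
  rintro ⟨d, t⟩ ⟨hd, ht⟩
  replace ht : t ∈ Icc (0:ℝ) 1 := ht
  have key : pt n hn h (d, t) - pt n hn h' (d, t) = (t * (h - h')) • ee n hn := by
    simp only [pt]; module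
  rw [dist_eq_norm, key, norm_smul, norm_ee, mul_one, Real.norm_eq_abs, abs_mul,
    abs_of_nonneg ht.1]
  calc t * |h - h'| ≤ 1 * |h - h'| := by
        apply mul_le_mul_of_nonneg_right ht.2 (abs_nonneg _)
    _ = |h - h'| := one_mul _

/-- `h(s) = √(1-s²)/s`. -/
def hfun (s : ℝ) : ℝ := Real.sqrt (1 - s ^ 2) / s

/-- The piece `D_{h(s), |s|}`. -/
def As (s : ℝ) : Set (E n) := trunc n hn (hfun s) |s|

def wvec (s : ℝ) : E n := (if s < 0 then Real.sqrt (1 - s ^ 2) else 0) • ee n hn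

/-- The translated piece. -/
def Ashift (s : ℝ) : Set (E n) := (fun y => wvec n hn s + y) '' As n hn s

/-- The cylinder `𝔻 × [0,1]`. -/
def cylSet : Set (E n) :=
  diskSet n hn + (fun t : ℝ => t • ee n hn) '' Icc (0:ℝ) 1

lemma cylSet_eq_param :
    cylSet n hn = (fun p : E n × ℝ => p.1 + p.2 • ee n hn) '' (diskSet n hn ×ˢ Icc (0:ℝ) 1) := by
  ext x
  constructor
  · rintro ⟨d, hd, y, ⟨t, ht, rfl⟩, rfl⟩
    exact ⟨(d, t), ⟨hd, ht⟩, rfl⟩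
  · rintro ⟨⟨d, t⟩, ⟨hd, ht⟩, rfl⟩
    exact ⟨d, hd, t • ee n hn, ⟨t, ht, rfl⟩, rfl⟩

lemma cyl_body : IsConvexBody (cylSet n hn) := by
  refine ⟨?_, ?_, ?_⟩
  · apply Convex.add (disk_convex n hn)
    have hseg : (fun t : ℝ => t • ee n hn) '' Icc (0:ℝ) 1 = segment ℝ 0 (ee n hn) := by
      rw [segment_eq_image']
      simp
    rw [hseg]
    exact (convex_segment _ _)
  · exact (disk_isCompact n hn).add (isCompact_Icc.image (by fun_prop))
  · exact ((disk_nonempty n hn).add ⟨_, mem_image_of_mem _ (left_mem_Icc.2 zero_le_one)⟩)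

lemma sqrt_one_sub_sq_le (s : ℝ) : Real.sqrt (1 - s ^ 2) ≤ 1 :=
  Real.sqrt_le_one.2 (by nlinarith [sq_nonneg s])

lemma one_sub_sqrt_le (s : ℝ) (hs : |s| ≤ 1) : 1 - Real.sqrt (1 - s ^ 2) ≤ s ^ 2 := by
  have h0 : 0 ≤ 1 - s ^ 2 := by nlinarith [sq_abs s, abs_le.1 hs, abs_nonneg s]
  have h1 : 1 - s ^ 2 ≤ Real.sqrt (1 - s ^ 2) := by
    nlinarith [Real.sq_sqrt h0,
      mul_nonneg (Real.sqrt_nonneg (1 - s ^ 2)) (sub_nonneg.2 (sqrt_one_sub_sq_le s))]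
  linarith

lemma Ashift_eq_param (s : ℝ) (hs : s ≠ 0) :
    Ashift n hn s = (fun p : E n × ℝ => wvec n hn s + pt n hn (hfun s) (p.1, |s| * p.2))
      '' (diskSet n hn ×ˢ Icc (0:ℝ) 1) := by
  have habs : 0 < |s| := abs_pos.2 hs
  ext x
  constructor
  · rintro ⟨y, ⟨⟨d, t⟩, ⟨hd, ht⟩, rfl⟩, rfl⟩
    replace hd : d ∈ diskSet n hn := hd
    replace ht : t ∈ Icc (0:ℝ) |s| := ht
    refine ⟨(d, t / |s|), ⟨hd, div_nonneg ht.1 habs.le, by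
      rw [div_le_one habs]; exact ht.2⟩, ?_⟩
    show wvec n hn s + pt n hn (hfun s) (d, |s| * (t / |s|))
      = wvec n hn s + pt n hn (hfun s) (d, t)
    rw [show |s| * (t / |s|) = t by field_simp]
  · rintro ⟨⟨d, u⟩, ⟨hd, hu⟩, rfl⟩
    replace hd : d ∈ diskSet n hn := hd
    replace hu : u ∈ Icc (0:ℝ) 1 := hu
    have h2 : |s| * u ∈ Icc (0:ℝ) |s| := by
      constructor
      · exact mul_nonneg (abs_nonneg s) hu.1
      · nlinarith [hu.2, abs_nonneg s, mul_nonneg (abs_nonneg s) (sub_nonneg.2 hu.2)]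
    exact ⟨pt n hn (hfun s) (d, |s| * u), ⟨(d, |s| * u), ⟨hd, h2⟩, rfl⟩, rfl⟩

lemma dist_param_le (s u : ℝ) (hs : s ≠ 0) (hs1 : |s| ≤ 1) (hu : u ∈ Icc (0:ℝ) 1)
    (d : E n) (hd : d ∈ diskSet n hn) :
    dist (wvec n hn s + pt n hn (hfun s) (d, |s| * u))
      (d + (if s < 0 then 1 - u else u) • ee n hn) ≤ |s| + s ^ 2 := by
  have hsq : Real.sqrt (1 - s ^ 2) ≤ 1 := sqrt_one_sub_sq_le s
  have hsq2 : 1 - Real.sqrt (1 - s ^ 2) ≤ s ^ 2 := one_sub_sqrt_le s hs1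
  have hsq0 : 0 ≤ Real.sqrt (1 - s ^ 2) := Real.sqrt_nonneg _
  set c : ℝ := if s < 0 then 1 - u else u with hc
  have hc0 : 0 ≤ c := by rw [hc]; split <;> [linarith [hu.2]; exact hu.1]
  have hc1 : c ≤ 1 := by rw [hc]; split <;> [linarith [hu.1]; exact hu.2]
  have key : (wvec n hn s + pt n hn (hfun s) (d, |s| * u)) - (d + c • ee n hn)
      = (-(|s| * u)) • d + (c * (Real.sqrt (1 - s ^ 2) - 1)) • ee n hn := by
    rcases lt_or_gt_of_ne hs with hneg | hpos
    · rw [hc, if_pos hneg]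
      simp only [wvec, if_pos hneg, pt, hfun, abs_of_neg hneg]
      match_scalars <;> (field_simp; try ring)
    · rw [hc, if_neg (not_lt.2 hpos.le)]
      simp only [wvec, if_neg (not_lt.2 hpos.le), pt, hfun, abs_of_pos hpos]
      match_scalars <;> (field_simp; try ring)
  have n1 : ‖(-(|s| * u)) • d‖ ≤ |s| := by
    rw [norm_smul, Real.norm_eq_abs, abs_neg, abs_mul, abs_abs, abs_of_nonneg hu.1]
    nlinarith [norm_nonneg d, hd.1, hu.1, hu.2, abs_nonneg s,
      mul_nonneg (abs_nonneg s) (sub_nonneg.2 (mul_le_one₀ hu.2 (norm_nonneg d) hd.1)),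
      mul_nonneg (mul_nonneg (abs_nonneg s) hu.1) (norm_nonneg d)]
  have n2 : ‖(c * (Real.sqrt (1 - s ^ 2) - 1)) • ee n hn‖ ≤ s ^ 2 := by
    rw [norm_smul, norm_ee, mul_one, Real.norm_eq_abs, abs_mul, abs_of_nonneg hc0,
      abs_sub_comm, abs_of_nonneg (by linarith)]
    calc c * (1 - Real.sqrt (1 - s ^ 2)) ≤ 1 * s ^ 2 :=
          mul_le_mul hc1 hsq2 (by linarith) zero_le_one
      _ = s ^ 2 := one_mul _
  calc dist (wvec n hn s + pt n hn (hfun s) (d, |s| * u)) (d + c • ee n hn)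
      = ‖(-(|s| * u)) • d + (c * (Real.sqrt (1 - s ^ 2) - 1)) • ee n hn‖ := by
        rw [dist_eq_norm, key]
    _ ≤ ‖(-(|s| * u)) • d‖ + ‖(c * (Real.sqrt (1 - s ^ 2) - 1)) • ee n hn‖ := norm_add_le _ _
    _ ≤ |s| + s ^ 2 := add_le_add n1 n2

lemma haus_Ashift_le (s : ℝ) (hs : s ≠ 0) (hs1 : |s| ≤ 1) :
    hausdorffDist (Ashift n hn s) (cylSet n hn) ≤ |s| + s ^ 2 := by
  rw [Ashift_eq_param n hn s hs, cylSet_eq_param]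
  apply hausdorffDist_le_of_mem_dist (by positivity)
  · rintro x ⟨⟨d, u⟩, ⟨hd, hu⟩, rfl⟩
    replace hd : d ∈ diskSet n hn := hd
    replace hu : u ∈ Icc (0:ℝ) 1 := hu
    have hc01 : (if s < 0 then 1 - u else u) ∈ Icc (0:ℝ) 1 := by
      constructor
      · split <;> [linarith [hu.2]; exact hu.1]
      · split <;> [linarith [hu.1]; exact hu.2]
    exact ⟨d + (if s < 0 then 1 - u else u) • ee n hn, ⟨(d, if s < 0 then 1 - u else u),
      ⟨hd, hc01⟩, rfl⟩, dist_param_le n hn s u hs hs1 hu d hd⟩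
  · rintro y ⟨⟨d, u'⟩, ⟨hd, hu'⟩, rfl⟩
    replace hd : d ∈ diskSet n hn := hd
    replace hu' : u' ∈ Icc (0:ℝ) 1 := hu'
    set u : ℝ := if s < 0 then 1 - u' else u' with hudef
    have hu : u ∈ Icc (0:ℝ) 1 := by
      constructor
      · rw [hudef]; split <;> [linarith [hu'.2]; exact hu'.1]
      · rw [hudef]; split <;> [linarith [hu'.1]; exact hu'.2]
    have hback : (if s < 0 then 1 - u else u) = u' := by
      rw [hudef]; split <;> [ring; rfl]
    refine ⟨wvec n hn s + pt n hn (hfun s) (d, |s| * u), ⟨(d, u), ⟨hd, hu⟩, rfl⟩, ?_⟩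
    rw [dist_comm]
    have hle := dist_param_le n hn s u hs hs1 hu d hd
    rwa [hback] at hle

end Chunk4

namespace Chunk5
open PhiMu Chunk2 Chunk3 Chunk4 TopologicalSpace
variable (n : ℕ) (hn : 0 < n)
variable (μ : Set (EuclideanSpace ℝ (Fin n)) → ℝ)
variable (hcont : ∀ (K : ℕ → Set (EuclideanSpace ℝ (Fin n))) (L : Set (EuclideanSpace ℝ (Fin n))),
      (∀ m, IsConvexBody (K m)) → IsConvexBody L →
      Tendsto (fun m => Metric.hausdorffDist (K m) L) atTop (𝓝 0) →
      Tendsto (fun m => μ (K m)) atTop (𝓝 (μ L)))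

include hcont in
lemma tendsto_mu (A : ℝ → Set (E n)) (L : Set (E n)) (S : Set ℝ) (x : ℝ)
    (hA : ∀ s ∈ S, IsConvexBody (A s)) (hL : IsConvexBody L)
    (hd : Tendsto (fun s => hausdorffDist (A s) L) (𝓝[S] x) (𝓝 0)) :
    Tendsto (fun s => μ (A s)) (𝓝[S] x) (𝓝 (μ L)) := by
  rw [tendsto_iff_seq_tendsto]
  intro u hu
  classical
  have huS : ∀ᶠ m in atTop, u m ∈ S := hu.eventually eventually_mem_nhdsWithin
  set K : ℕ → Set (E n) := fun m => if u m ∈ S then A (u m) else L with hK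
  have hKb : ∀ m, IsConvexBody (K m) := by
    intro m
    rw [hK]
    dsimp only
    split
    · exact hA _ ‹_›
    · exact hL
  have hKd : Tendsto (fun m => hausdorffDist (K m) L) atTop (𝓝 0) := by
    apply Tendsto.congr' _ (hd.comp hu)
    filter_upwards [huS] with m hm
    simp only [hK, if_pos hm, Function.comp]
  apply (hcont K L hKb hL hKd).congr'
  filter_upwards [huS] with m hm
  simp only [hK, if_pos hm, Function.comp]

/-- Convexity passes to Hausdorff limits. -/
lemma convex_of_tendsto (K : ℕ → NonemptyCompacts (E n)) (L : NonemptyCompacts (E n))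
    (hKc : ∀ m, Convex ℝ (K m : Set (E n))) (hKL : Tendsto K atTop (𝓝 L)) :
    Convex ℝ (L : Set (E n)) := by
  intro x hx y hy a b ha hb hab
  have hne : ∀ m, EMetric.hausdorffEdist (K m : Set (E n)) (L : Set (E n)) ≠ ⊤ := fun m =>
    hausdorffEdist_ne_top_of_nonempty_of_bounded (K m).nonempty L.nonempty
      (K m).isCompact.isBounded L.isCompact.isBounded
  have hdist : Tendsto (fun m => hausdorffDist (K m : Set (E n)) (L : Set (E n)))
      atTop (𝓝 0) := by
    have h1 := tendsto_iff_dist_tendsto_zero.1 hKL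
    simpa only [NonemptyCompacts.dist_eq] using h1
  have key : ∀ ε : ℝ, 0 < ε → infDist (a • x + b • y) (L : Set (E n)) ≤ 2 * ε := by
    intro ε hε
    obtain ⟨m, hm⟩ := (hdist.eventually (gt_mem_nhds hε)).exists
    have hmL : hausdorffDist (L : Set (E n)) (K m : Set (E n)) < ε := by
      rwa [hausdorffDist_comm]
    obtain ⟨x', hx', hxx'⟩ := exists_dist_lt_of_hausdorffDist_lt hx hmL
      (by rw [EMetric.hausdorffEdist_comm]; exact hne m)
    obtain ⟨y', hy', hyy'⟩ := exists_dist_lt_of_hausdorffDist_lt hy hmL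
      (by rw [EMetric.hausdorffEdist_comm]; exact hne m)
    have hz' : a • x' + b • y' ∈ (K m : Set (E n)) := hKc m hx' hy' ha hb hab
    have hdz : dist (a • x + b • y) (a • x' + b • y') ≤ a * ε + b * ε := by
      calc dist (a • x + b • y) (a • x' + b • y')
          ≤ dist (a • x) (a • x') + dist (b • y) (b • y') := dist_add_add_le _ _ _ _
        _ = a * dist x x' + b * dist y y' := by
            rw [dist_smul₀, dist_smul₀, Real.norm_of_nonneg ha, Real.norm_of_nonneg hb]
        _ ≤ a * ε + b * ε := by
            apply add_le_add <;> apply mul_le_mul_of_nonneg_left (le_of_lt ‹_›) ‹_›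
    calc infDist (a • x + b • y) (L : Set (E n))
        ≤ infDist (a • x' + b • y') (L : Set (E n))
          + dist (a • x + b • y) (a • x' + b • y') := infDist_le_infDist_add_dist
      _ ≤ hausdorffDist (K m : Set (E n)) (L : Set (E n)) + (a * ε + b * ε) := by
          apply add_le_add (infDist_le_hausdorffDist_of_mem hz' (hne m)) hdz
      _ ≤ ε + (a * ε + b * ε) := by linarith
      _ = 2 * ε := by nlinarith [hab]
  have hzero : infDist (a • x + b • y) (L : Set (E n)) = 0 := by
    apply le_antisymm _ infDist_nonneg
    have : ∀ ε : ℝ, 0 < ε → infDist (a • x + b • y) (L : Set (E n)) ≤ 0 + ε := by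
      intro ε hε
      calc infDist (a • x + b • y) (L : Set (E n)) ≤ 2 * (ε / 2) := key (ε / 2) (by linarith)
        _ = 0 + ε := by ring
    exact le_of_forall_pos_le_add this
  exact (IsClosed.mem_iff_infDist_zero L.isCompact.isClosed L.nonempty).2 hzero

include hcont in
/-- A continuous valuation is bounded on convex bodies inside the unit ball. -/
lemma mu_bdd : BddAbove (Set.range fun K : {K : Set (E n) //
    IsConvexBody K ∧ K ⊆ closedBall 0 1} => |μ (K : Set (E n))|) := by
  by_contra hb
  have hex : ∀ m : ℕ, ∃ K : {K : Set (E n) // IsConvexBody K ∧ K ⊆ closedBall 0 1},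
      (m : ℝ) < |μ (K : Set (E n))| := by
    intro m
    by_contra hcon
    push_neg at hcon
    exact hb ⟨(m : ℝ), by rintro r ⟨K, rfl⟩; exact hcon K⟩
  choose Ksub hKsub using hex
  haveI : CompactSpace ↥(closedBall (0 : E n) 1) :=
    isCompact_iff_compactSpace.1 (isCompact_closedBall (0 : E n) 1)
  set ι : NonemptyCompacts ↥(closedBall (0 : E n) 1) → NonemptyCompacts (E n) := fun P =>
    ⟨⟨Subtype.val '' (P : Set ↥(closedBall (0 : E n) 1)),
      P.isCompact.image continuous_subtype_val⟩, P.nonempty.image _⟩ with hι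
  have hiso : Isometry ι := by
    apply Isometry.of_dist_eq
    intro P Q
    rw [NonemptyCompacts.dist_eq, NonemptyCompacts.dist_eq]
    exact hausdorffDist_image isometry_subtype_coe
  have hrange : ∀ L : NonemptyCompacts (E n), (L : Set (E n)) ⊆ closedBall 0 1 →
      L ∈ Set.range ι := by
    intro L hL
    have hPc : IsCompact (Subtype.val ⁻¹' (L : Set (E n)) : Set ↥(closedBall (0 : E n) 1)) :=
      (L.isCompact.isClosed.preimage continuous_subtype_val).isCompact
    have hPne : (Subtype.val ⁻¹' (L : Set (E n)) : Set ↥(closedBall (0 : E n) 1)).Nonempty := by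
      obtain ⟨p, hp⟩ := L.nonempty
      exact ⟨⟨p, hL hp⟩, hp⟩
    refine ⟨⟨⟨Subtype.val ⁻¹' (L : Set (E n)), hPc⟩, hPne⟩, ?_⟩
    apply NonemptyCompacts.ext
    show Subtype.val '' (Subtype.val ⁻¹' (L : Set (E n))) = (L : Set (E n))
    rw [Subtype.image_preimage_coe]
    exact inter_eq_self_of_subset_right hL
  set k : ℕ → NonemptyCompacts (E n) := fun m =>
    ⟨⟨(Ksub m : Set (E n)), (Ksub m).2.1.2.1⟩, (Ksub m).2.1.2.2⟩ with hk
  have hkmem : ∀ m, k m ∈ Set.range ι := fun m => hrange _ (Ksub m).2.2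
  have hseq : IsSeqCompact (Set.range ι) := ((isCompact_range hiso.continuous)).isSeqCompact
  obtain ⟨L₀, hL₀, φ, hφ, hconv⟩ := hseq hkmem
  have hL₀ball : (L₀ : Set (E n)) ⊆ closedBall 0 1 := by
    obtain ⟨P, rfl⟩ := hL₀
    rintro z ⟨w, _, rfl⟩
    exact w.2
  have hL₀convex : Convex ℝ (L₀ : Set (E n)) :=
    convex_of_tendsto n (fun m => k (φ m)) L₀ (fun m => (Ksub (φ m)).2.1.1) hconv
  have hL₀body : IsConvexBody (L₀ : Set (E n)) := ⟨hL₀convex, L₀.isCompact, L₀.nonempty⟩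
  have hdist : Tendsto (fun m => hausdorffDist ((Ksub (φ m) : Set (E n))) (L₀ : Set (E n)))
      atTop (𝓝 0) := by
    have h1 := tendsto_iff_dist_tendsto_zero.1 hconv
    simp only [NonemptyCompacts.dist_eq] at h1
    exact h1
  have hμconv := hcont (fun m => (Ksub (φ m) : Set (E n))) (L₀ : Set (E n))
    (fun m => (Ksub (φ m)).2.1) hL₀body hdist
  have habs : Tendsto (fun m => |μ ((Ksub (φ m) : Set (E n)))|) atTop (𝓝 |μ (L₀ : Set (E n))|) :=
    hμconv.abs
  have htop : Tendsto (fun m => |μ ((Ksub (φ m) : Set (E n)))|) atTop atTop := by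
    apply tendsto_atTop_mono _ tendsto_natCast_atTop_atTop
    intro m
    exact le_trans (Nat.cast_le.2 hφ.le_apply) (hKsub (φ m)).le
  exact not_tendsto_atTop_of_tendsto_nhds habs htop

end Chunk5

namespace Chunk6
open PhiMu Chunk2 Chunk3 Chunk4 Chunk5
variable (n : ℕ) (hn : 0 < n)

lemma geom_id (j : ℕ) (ε : ℝ) :
    ε * ∑ i ∈ Finset.range j, (1 - ε) ^ i = 1 - (1 - ε) ^ j := by
  have h := geom_sum_mul (1 - ε) j
  linear_combination -h

lemma denom_pos (j : ℕ) (hj : 1 ≤ j) (ε : ℝ) (hε0 : 0 < ε) (hε1 : ε ≤ 1) :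
    0 < 1 - (1 - ε) ^ j := by
  have : (1 - ε) ^ j < 1 := pow_lt_one₀ (by linarith) (by linarith) (by omega)
  linarith

lemma sum_pos' (j : ℕ) (hj : 1 ≤ j) (ε : ℝ) (hε0 : 0 < ε) (hε1 : ε ≤ 1) :
    0 < ∑ i ∈ Finset.range j, (1 - ε) ^ i := by
  have h1 := denom_pos j hj ε hε0 hε1
  have h2 := geom_id j ε
  nlinarith

lemma ratio_eq (j : ℕ) (hj : 1 ≤ j) (ε : ℝ) (hε0 : 0 < ε) (hε1 : ε ≤ 1) :
    ε / (1 - (1 - ε) ^ j) = (∑ i ∈ Finset.range j, (1 - ε) ^ i)⁻¹ := by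
  have hS := (sum_pos' j hj ε hε0 hε1).ne'
  rw [← geom_id j ε]
  field_simp

lemma f_le_two (j : ℕ) (hj : 1 ≤ j) (t : ℝ) (ht : t ∈ Ioc (0:ℝ) 1) :
    (1 + (1 - t) ^ j) * t / (1 - (1 - t) ^ j) ≤ 2 := by
  have ha0 : 0 ≤ 1 - t := by linarith [ht.2]
  have ha1 : (1 - t) ^ j ≤ 1 - t := pow_le_of_le_one ha0 (by linarith [ht.1]) (by omega)
  have hd : t ≤ 1 - (1 - t) ^ j := by linarith
  have hdpos : 0 < 1 - (1 - t) ^ j := lt_of_lt_of_le ht.1 hd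
  rw [div_le_iff₀ hdpos]
  have haj : 0 ≤ (1 - t) ^ j := pow_nonneg ha0 j
  nlinarith [ht.1, ht.2]

end Chunk6

namespace Chunk7
open PhiMu Chunk2 Chunk3 Chunk4 Chunk5 Chunk6
variable (n : ℕ) (hn : 0 < n)

lemma cone_zero : coneSet n hn 0 = diskSet n hn := by
  rw [coneSet, zero_smul]
  rw [union_eq_self_of_subset_right (singleton_subset_iff.2 (zero_mem_disk n hn))]
  exact (disk_convex n hn).convexHull_eq

lemma hfun_of_abs_one (s : ℝ) (hs : |s| = 1) : hfun s = 0 := by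
  have h2 : 1 - s ^ 2 = 0 := by nlinarith [sq_abs s]
  rw [hfun, h2, Real.sqrt_zero, zero_div]

lemma abs_mul_abs_hfun (s : ℝ) (hs : s ≠ 0) :
    |s| * |hfun s| = Real.sqrt (1 - s ^ 2) := by
  rw [hfun, abs_div, abs_of_nonneg (Real.sqrt_nonneg _)]
  field_simp

lemma As_subset_ball (s : ℝ) (hs : s ≠ 0) (hs1 : |s| ≤ 1) :
    As n hn s ⊆ closedBall 0 2 := by
  rintro x ⟨⟨d, t⟩, ⟨hd, ht⟩, rfl⟩
  replace hd : d ∈ diskSet n hn := hd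
  replace ht : t ∈ Icc (0:ℝ) |s| := ht
  rw [mem_closedBall_zero_iff]
  refine le_trans (norm_pt_le n hn (hfun s) t d hd ⟨ht.1, ht.2.trans hs1⟩) ?_
  have h1 : t * |hfun s| ≤ |s| * |hfun s| :=
    mul_le_mul_of_nonneg_right ht.2 (abs_nonneg _)
  rw [abs_mul_abs_hfun s hs] at h1
  have h2 := sqrt_one_sub_sq_le s
  linarith

section Val
variable {n} (j : ℕ)
variable (μ : Set (EuclideanSpace ℝ (Fin n)) → ℝ)
variable (hhom : ∀ (t : ℝ) (K : Set (EuclideanSpace ℝ (Fin n))), 0 ≤ t → IsConvexBody K →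
      μ (t • K) = t ^ j * μ K)

include hhom in
lemma mu_ball2_le (hbdd : BddAbove (Set.range fun K : {K : Set (E n) //
      IsConvexBody K ∧ K ⊆ closedBall 0 1} => |μ (K : Set (E n))|))
    (K : Set (E n)) (hK : IsConvexBody K) (hKb : K ⊆ closedBall 0 2) :
    |μ K| ≤ 2 ^ j * (⨆ L : {K : Set (E n) // IsConvexBody K ∧ K ⊆ closedBall 0 1},
      |μ (L : Set (E n))|) := by
  have hhalf : IsConvexBody ((2⁻¹:ℝ) • K) := body_smul n _ _ hK
  have hsub : (2⁻¹:ℝ) • K ⊆ closedBall 0 1 := by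
    rintro x ⟨y, hy, rfl⟩
    have := hKb hy
    rw [mem_closedBall_zero_iff] at this ⊢
    rw [norm_smul]
    norm_num
    linarith
  have hKeq : K = (2:ℝ) • ((2⁻¹:ℝ) • K) := by
    rw [smul_smul]; norm_num
  have hμ : μ K = 2 ^ j * μ ((2⁻¹:ℝ) • K) := by
    conv_lhs => rw [hKeq]
    exact hhom 2 _ (by norm_num) hhalf
  rw [hμ, abs_mul, abs_of_nonneg (by positivity : (0:ℝ) ≤ 2 ^ j)]
  apply mul_le_mul_of_nonneg_left _ (by positivity)
  exact le_ciSup hbdd ⟨(2⁻¹:ℝ) • K, hhalf, hsub⟩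

variable (hval : ∀ K L : Set (EuclideanSpace ℝ (Fin n)), IsConvexBody K → IsConvexBody L →
      Convex ℝ (K ∪ L) → μ K + μ L = μ (K ∪ L) + μ (K ∩ L))
variable (htrans : ∀ (x : EuclideanSpace ℝ (Fin n)) (K : Set (EuclideanSpace ℝ (Fin n))),
      IsConvexBody K → μ ((fun y => x + y) '' K) = μ K)

include hval htrans hhom in
lemma key_identity (hj : 1 ≤ j) (s : ℝ) (hs0 : s ≠ 0) (hs1 : |s| < 1) :
    |s| * μ (coneSet n hn (hfun s))
      = (μ (As n hn s) - (1 - |s|) ^ j * μ (diskSet n hn))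
        * (∑ i ∈ Finset.range j, (1 - |s|) ^ i)⁻¹ := by
  have habs : 0 < |s| := abs_pos.2 hs0
  have hh : hfun s ≠ 0 := by
    apply div_ne_zero _ hs0
    exact ne_of_gt (Real.sqrt_pos.2 (by nlinarith [sq_abs s]))
  have hμ := mu_trunc_eq hn j μ hval htrans hhom (hfun s) |s| hh habs.le hs1.le
  have hgeo := geom_id j |s|
  have hSpos := sum_pos' j hj |s| habs hs1.le
  have hX : μ (As n hn s) - (1 - |s|) ^ j * μ (diskSet n hn)
      = |s| * (∑ i ∈ Finset.range j, (1 - |s|) ^ i) * μ (coneSet n hn (hfun s)) := by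
    rw [show As n hn s = trunc n hn (hfun s) |s| from rfl, hμ, ← hgeo]
    ring
  rw [hX]
  field_simp

end Val
end Chunk7

end

/-- Properties of `φ_μ(s) = μ(C_{√(1-s²)/s})` for a continuous translation invariant
`j`-homogeneous valuation `μ`: continuity on `[-1,1]\{0}`, `φ_μ(1) = φ_μ(-1)`,
`lim_{s→0} |s|φ_μ(s) = (μ(𝔻^{n-1}×[0,1]) - μ(𝔻^{n-1}))/j`, and the bound
`sup |s||φ_μ(s)| ≤ 2^j ‖μ‖ · sup_{t∈(0,1]} (1+(1-t)^j)t/(1-(1-t)^j)`, the latter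
supremum being finite. -/
theorem phi_mu_properties (n j : ℕ) (hn : 2 ≤ n) (hj1 : 1 ≤ j) (hj2 : j ≤ n - 1)
    (μ : Set (EuclideanSpace ℝ (Fin n)) → ℝ)
    (hval : ∀ K L : Set (EuclideanSpace ℝ (Fin n)), IsConvexBody K → IsConvexBody L →
      Convex ℝ (K ∪ L) → μ K + μ L = μ (K ∪ L) + μ (K ∩ L))
    (htrans : ∀ (x : EuclideanSpace ℝ (Fin n)) (K : Set (EuclideanSpace ℝ (Fin n))),
      IsConvexBody K → μ ((fun y => x + y) '' K) = μ K)
    (hhom : ∀ (t : ℝ) (K : Set (EuclideanSpace ℝ (Fin n))), 0 ≤ t → IsConvexBody K →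
      μ (t • K) = t ^ j * μ K)
    (hcont : ∀ (K : ℕ → Set (EuclideanSpace ℝ (Fin n))) (L : Set (EuclideanSpace ℝ (Fin n))),
      (∀ m, IsConvexBody (K m)) → IsConvexBody L →
      Tendsto (fun m => Metric.hausdorffDist (K m) L) atTop (𝓝 0) →
      Tendsto (fun m => μ (K m)) atTop (𝓝 (μ L))) :
    letI φ : ℝ → ℝ := fun s => μ (coneSet n (by omega) (Real.sqrt (1 - s ^ 2) / s))
    ContinuousOn φ (Set.Icc (-1:ℝ) 1 \ {0}) ∧
    φ 1 = φ (-1) ∧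
    Tendsto (fun s => |s| * φ s) (𝓝[Set.Icc (-1:ℝ) 1 \ {0}] 0)
      (𝓝 ((μ (diskSet n (by omega) +
          (fun t => t • EuclideanSpace.single (lastIdx n (by omega)) (1:ℝ)) '' Set.Icc (0:ℝ) 1) -
        μ (diskSet n (by omega))) / j)) ∧
    (⨆ s : (Set.Icc (-1:ℝ) 1 \ {0} : Set ℝ), |(s:ℝ)| * |φ (s:ℝ)|) ≤
      2 ^ j * (⨆ K : {K : Set (EuclideanSpace ℝ (Fin n)) //
          IsConvexBody K ∧ K ⊆ Metric.closedBall 0 1}, |μ (K:Set (EuclideanSpace ℝ (Fin n)))|) *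
        (⨆ t : Set.Ioc (0:ℝ) 1, (1 + (1 - (t:ℝ)) ^ j) * (t:ℝ) / (1 - (1 - (t:ℝ)) ^ j)) ∧
    BddAbove ((fun t => (1 + (1 - t) ^ j) * t / (1 - (1 - t) ^ j)) '' Set.Ioc (0:ℝ) 1) := by
  open PhiMu Chunk2 Chunk3 Chunk4 Chunk5 Chunk6 Chunk7 in
  have hn0 : 0 < n := by omega
  have hj0 : (j:ℝ) ≠ 0 := Nat.cast_ne_zero.2 (by omega)
  -- membership facts
  have hmemS : ∀ s ∈ Set.Icc (-1:ℝ) 1 \ {0}, s ≠ 0 ∧ |s| ≤ 1 := by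
    intro s hs
    exact ⟨fun h => hs.2 (by simp [h]), abs_le.2 ⟨hs.1.1, hs.1.2⟩⟩
  -- Part 1 : continuity
  have p1 : ContinuousOn (fun s => μ (coneSet n hn0 (hfun s))) (Set.Icc (-1:ℝ) 1 \ {0}) := by
    intro x hx
    have hx0 : x ≠ 0 := (hmemS x hx).1
    have hsq : ContinuousAt (fun s : ℝ => Real.sqrt (1 - s ^ 2)) x :=
      Real.continuous_sqrt.continuousAt.comp
        ((continuous_const.sub (continuous_pow 2)).continuousAt)
    have hcx : ContinuousAt hfun x := hsq.div continuousAt_id hx0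
    have h0 : Tendsto (fun s : ℝ => |hfun s - hfun x|)
        (𝓝[Set.Icc (-1:ℝ) 1 \ {0}] x) (𝓝 0) := by
      have h1 : ContinuousAt (fun s => |hfun s - hfun x|) x := (hcx.sub continuousAt_const).abs
      have h2 := h1.tendsto
      simp only [sub_self, abs_zero] at h2
      exact h2.mono_left nhdsWithin_le_nhds
    have hdt : Tendsto (fun s => hausdorffDist (coneSet n hn0 (hfun s)) (coneSet n hn0 (hfun x)))
        (𝓝[Set.Icc (-1:ℝ) 1 \ {0}] x) (𝓝 0) :=
      tendsto_of_tendsto_of_tendsto_of_le_of_le tendsto_const_nhds h0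
        (fun s => hausdorffDist_nonneg) (fun s => cone_hausdorff_le n hn0 _ _)
    exact tendsto_mu n μ hcont _ _ _ x (fun s _ => cone_body n hn0 _) (cone_body n hn0 _) hdt
  -- Part 2
  have p2 : μ (coneSet n hn0 (hfun 1)) = μ (coneSet n hn0 (hfun (-1))) := by
    rw [hfun_of_abs_one 1 (by norm_num), hfun_of_abs_one (-1) (by norm_num)]
  -- Part 3
  have hevS : ∀ᶠ s in 𝓝[Set.Icc (-1:ℝ) 1 \ {0}] 0, s ∈ Set.Icc (-1:ℝ) 1 \ {0} :=
    eventually_mem_nhdsWithin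
  have hevlt : ∀ᶠ s in 𝓝[Set.Icc (-1:ℝ) 1 \ {0}] (0:ℝ), |s| < 1 := by
    have h1 : ∀ᶠ s in 𝓝 (0:ℝ), |s| < 1 := by
      have := eventually_abs_sub_lt (0:ℝ) one_pos
      simpa using this
    exact h1.filter_mono nhdsWithin_le_nhds
  have T1 : Tendsto (fun s => μ (Ashift n hn0 s)) (𝓝[Set.Icc (-1:ℝ) 1 \ {0}] 0)
      (𝓝 (μ (cylSet n hn0))) := by
    apply tendsto_mu n μ hcont _ _ _ _
      (fun s hs => body_translate n _ _ (trunc_body n hn0 _ _ (abs_nonneg s) (hmemS s hs).2))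
      (cyl_body n hn0)
    have hub : Tendsto (fun s : ℝ => |s| + s ^ 2) (𝓝[Set.Icc (-1:ℝ) 1 \ {0}] 0) (𝓝 0) := by
      have hc : Continuous fun s : ℝ => |s| + s ^ 2 := continuous_abs.add (continuous_pow 2)
      have h2 := hc.tendsto 0
      simp only [abs_zero, ne_eq, OfNat.ofNat_ne_zero, not_false_eq_true, zero_pow, add_zero] at h2
      exact h2.mono_left nhdsWithin_le_nhds
    apply tendsto_of_tendsto_of_tendsto_of_le_of_le' tendsto_const_nhds hub
    · exact Eventually.of_forall fun s => hausdorffDist_nonneg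
    · filter_upwards [hevS] with s hs
      exact haus_Ashift_le n hn0 s (hmemS s hs).1 (hmemS s hs).2
  have T2 : Tendsto (fun s : ℝ => (1 - |s|) ^ j * μ (diskSet n hn0))
      (𝓝[Set.Icc (-1:ℝ) 1 \ {0}] 0) (𝓝 (μ (diskSet n hn0))) := by
    have hc : Continuous fun s : ℝ => (1 - |s|) ^ j * μ (diskSet n hn0) :=
      ((continuous_const.sub continuous_abs).pow j).mul continuous_const
    have h2 := hc.tendsto 0
    simp only [abs_zero, sub_zero, one_pow, one_mul] at h2
    exact h2.mono_left nhdsWithin_le_nhds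
  have T3 : Tendsto (fun s : ℝ => (∑ i ∈ Finset.range j, (1 - |s|) ^ i)⁻¹)
      (𝓝[Set.Icc (-1:ℝ) 1 \ {0}] 0) (𝓝 ((j:ℝ)⁻¹)) := by
    have hc : Continuous fun s : ℝ => ∑ i ∈ Finset.range j, (1 - |s|) ^ i :=
      continuous_finset_sum _ fun i _ => (continuous_const.sub continuous_abs).pow i
    have h2 := (hc.tendsto 0).inv₀ (by simp [hj0])
    simp only [abs_zero, sub_zero, one_pow, Finset.sum_const, Finset.card_range,
      nsmul_eq_mul, mul_one] at h2
    exact h2.mono_left nhdsWithin_le_nhds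
  have p3 : Tendsto (fun s => |s| * μ (coneSet n hn0 (hfun s)))
      (𝓝[Set.Icc (-1:ℝ) 1 \ {0}] 0)
      (𝓝 ((μ (cylSet n hn0) - μ (diskSet n hn0)) / j)) := by
    have hcomb := (T1.sub T2).mul T3
    rw [div_eq_mul_inv]
    apply hcomb.congr'
    filter_upwards [hevS, hevlt] with s hs hlt
    have hs0 := (hmemS s hs).1
    have hAeq : μ (Ashift n hn0 s) = μ (As n hn0 s) :=
      htrans _ _ (trunc_body n hn0 _ _ (abs_nonneg s) (hmemS s hs).2)
    rw [hAeq]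
    exact (key_identity hn0 j μ hhom hval htrans hj1 s hs0 hlt).symm
  -- Part 4
  have hbdd := mu_bdd n μ hcont
  have hMD : |μ (diskSet n hn0)| ≤ ⨆ K : {K : Set (E n) //
      IsConvexBody K ∧ K ⊆ closedBall 0 1}, |μ (K : Set (E n))| :=
    le_ciSup hbdd ⟨diskSet n hn0, disk_body n hn0, disk_subset_ball n hn0⟩
  set M := ⨆ K : {K : Set (E n) // IsConvexBody K ∧ K ⊆ closedBall 0 1},
    |μ (K : Set (E n))| with hM
  have hM0 : 0 ≤ M := le_trans (abs_nonneg _) hMD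
  have hSb : BddAbove (Set.range fun t : Set.Ioc (0:ℝ) 1 =>
      (1 + (1 - (t:ℝ)) ^ j) * (t:ℝ) / (1 - (1 - (t:ℝ)) ^ j)) := by
    refine ⟨2, ?_⟩
    rintro r ⟨t, rfl⟩
    exact f_le_two j hj1 t t.2
  set Ssup := ⨆ t : Set.Ioc (0:ℝ) 1, (1 + (1 - (t:ℝ)) ^ j) * (t:ℝ) / (1 - (1 - (t:ℝ)) ^ j)
    with hSsup
  have hS1 : 1 ≤ Ssup := by
    have h1 := le_ciSup hSb ⟨1, by norm_num⟩
    have h2 : (1 + (1 - (1:ℝ)) ^ j) * 1 / (1 - (1 - (1:ℝ)) ^ j) = 1 := by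
      rw [sub_self, zero_pow (by omega)]
      norm_num
    rw [h2] at h1
    exact h1
  have h2j : (1:ℝ) ≤ 2 ^ j := one_le_pow₀ (by norm_num)
  haveI : Nonempty ↥(Set.Icc (-1:ℝ) 1 \ {0} : Set ℝ) :=
    ⟨⟨1, ⟨⟨by norm_num, le_rfl⟩, by norm_num⟩⟩⟩
  have p4 : (⨆ s : (Set.Icc (-1:ℝ) 1 \ {0} : Set ℝ),
      |(s:ℝ)| * |μ (coneSet n hn0 (hfun (s:ℝ)))|) ≤ 2 ^ j * M * Ssup := by
    apply ciSup_le
    rintro ⟨s, hsS⟩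
    have hs0 := (hmemS s hsS).1
    have habs1 := (hmemS s hsS).2
    have habspos : 0 < |s| := abs_pos.2 hs0
    rcases eq_or_lt_of_le habs1 with heq | hlt
    · -- |s| = 1
      rw [hfun_of_abs_one s heq, cone_zero n hn0, heq]
      nlinarith [hMD, hM0, hS1, h2j, mul_nonneg (sub_nonneg.2 hS1)
        (mul_nonneg (by positivity : (0:ℝ) ≤ 2 ^ j) hM0),
        mul_nonneg (sub_nonneg.2 h2j) hM0, abs_nonneg (μ (diskSet n hn0))]
    · -- |s| < 1
      have hkey := key_identity hn0 j μ hhom hval htrans hj1 s hs0 hlt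
      have haj : (0:ℝ) ≤ (1 - |s|) ^ j := pow_nonneg (by linarith) j
      have haj1 : (1 - |s|) ^ j ≤ 1 := pow_le_one₀ (by linarith) (by linarith [abs_nonneg s])
      have hSpos := sum_pos' j hj1 |s| habspos habs1
      have hSinv : (0:ℝ) ≤ (∑ i ∈ Finset.range j, (1 - |s|) ^ i)⁻¹ :=
        inv_nonneg.2 hSpos.le
      have h1 : |s| * |μ (coneSet n hn0 (hfun s))| = |(|s| * μ (coneSet n hn0 (hfun s)))| := by
        rw [abs_mul, abs_abs]
      rw [h1, hkey, abs_mul, abs_of_nonneg hSinv]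
      have hAsle : |μ (As n hn0 s)| ≤ 2 ^ j * M :=
        mu_ball2_le j μ hhom hbdd _ (trunc_body n hn0 _ _ (abs_nonneg s) habs1)
          (As_subset_ball n hn0 s hs0 habs1)
      have hXle : |μ (As n hn0 s) - (1 - |s|) ^ j * μ (diskSet n hn0)|
          ≤ 2 ^ j * M + (1 - |s|) ^ j * M := by
        have h2 := abs_sub (μ (As n hn0 s)) ((1 - |s|) ^ j * μ (diskSet n hn0))
        have h3 : |(1 - |s|) ^ j * μ (diskSet n hn0)| = (1 - |s|) ^ j * |μ (diskSet n hn0)| := by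
          rw [abs_mul, abs_of_nonneg haj]
        have h4 : (1 - |s|) ^ j * |μ (diskSet n hn0)| ≤ (1 - |s|) ^ j * M :=
          mul_le_mul_of_nonneg_left hMD haj
        linarith [hAsle]
      have hfs : (1 + (1 - |s|) ^ j) * |s| / (1 - (1 - |s|) ^ j)
          = (1 + (1 - |s|) ^ j) * (∑ i ∈ Finset.range j, (1 - |s|) ^ i)⁻¹ := by
        rw [mul_div_assoc, ratio_eq j hj1 |s| habspos habs1]
      have hfle : (1 + (1 - |s|) ^ j) * |s| / (1 - (1 - |s|) ^ j) ≤ Ssup :=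
        le_ciSup hSb ⟨|s|, habspos, habs1⟩
      calc |μ (As n hn0 s) - (1 - |s|) ^ j * μ (diskSet n hn0)|
            * (∑ i ∈ Finset.range j, (1 - |s|) ^ i)⁻¹
          ≤ (2 ^ j * M + (1 - |s|) ^ j * M)
            * (∑ i ∈ Finset.range j, (1 - |s|) ^ i)⁻¹ := by
            apply mul_le_mul_of_nonneg_right hXle hSinv
        _ ≤ (2 ^ j * M * (1 + (1 - |s|) ^ j))
            * (∑ i ∈ Finset.range j, (1 - |s|) ^ i)⁻¹ := by
            apply mul_le_mul_of_nonneg_right _ hSinv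
            nlinarith [mul_nonneg (mul_nonneg (sub_nonneg.2 h2j) haj) hM0]
        _ = 2 ^ j * M * ((1 + (1 - |s|) ^ j) * |s| / (1 - (1 - |s|) ^ j)) := by
            rw [hfs]; ring
        _ ≤ 2 ^ j * M * Ssup := by
            apply mul_le_mul_of_nonneg_left hfle (by positivity)
  have p5 : BddAbove ((fun t : ℝ => (1 + (1 - t) ^ j) * t / (1 - (1 - t) ^ j))
      '' Set.Ioc (0:ℝ) 1) := by
    refine ⟨2, ?_⟩
    rintro r ⟨t, ht, rfl⟩
    exact f_le_two j hj1 t ht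
  exact ⟨p1, p2, p3, p4, p5⟩
end

section
/- Let n ≥ 2, 1 ≤ j ≤ n-1, and let D^n_j be the set of continuous ζ : (0,∞) → ℝ with support bounded from above such that lim_{t→0} t^{n-j}ζ(t) = 0 and lim_{t→0} ∫_t^∞ ζ(s)s^{n-j-1} ds exists and is finite. Then the map R^{n-j} : D^n_j → C_c([0,∞)) given by R^{n-j}(ζ)(t) = t^{n-j}ζ(t) + (n-j)∫_t^∞ ζ(s)s^{n-j-1}ds (with R^{n-j}(ζ)(0) defined as the limit as t → 0⁺) is a well-defined bijection onto the space of continuous compactly supported functions on [0,∞). -/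
open Filter Topology MeasureTheory Set

/-- Membership in `D^n_j`: continuous on `(0,∞)`, support bounded from above,
`t^{n-j} ζ(t) → 0` as `t → 0⁺`, and `∫_t^∞ ζ(s)s^{n-j-1} ds` has a finite limit as
`t → 0⁺`. (Functions on `(0,∞)` are encoded as functions on `ℝ` vanishing on `(-∞,0]`.) -/
def DnjMem (n j : ℕ) (ζ : ℝ → ℝ) : Prop :=
  ContinuousOn ζ (Set.Ioi (0:ℝ)) ∧ (∀ t ≤ (0:ℝ), ζ t = 0) ∧
  (∃ R : ℝ, ∀ t ≥ R, ζ t = 0) ∧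
  Tendsto (fun t => t ^ ((n:ℝ) - j) * ζ t) (𝓝[Set.Ioi (0:ℝ)] 0) (𝓝 0) ∧
  ∃ L : ℝ, Tendsto (fun t => ∫ s in Set.Ioi t, ζ s * s ^ ((n:ℝ) - j - 1))
    (𝓝[Set.Ioi (0:ℝ)] 0) (𝓝 L)

/-- The transform `R^{n-j}(ζ)(t) = t^{n-j}ζ(t) + (n-j)∫_t^∞ ζ(s)s^{n-j-1} ds`, extended to
`t ≤ 0` by its limit as `t → 0⁺`. -/
noncomputable def Rmap (n j : ℕ) (ζ : ℝ → ℝ) (t : ℝ) : ℝ :=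
  if t ≤ 0 then
    limUnder (𝓝[Set.Ioi (0:ℝ)] 0)
      (fun r => r ^ ((n:ℝ) - j) * ζ r + ((n:ℝ) - j) * ∫ s in Set.Ioi r, ζ s * s ^ ((n:ℝ) - j - 1))
  else t ^ ((n:ℝ) - j) * ζ t + ((n:ℝ) - j) * ∫ s in Set.Ioi t, ζ s * s ^ ((n:ℝ) - j - 1)


set_option maxHeartbeats 1000000



lemma myIntegrableOn_Ioc {h : ℝ → ℝ} {a b : ℝ} (ha : 0 < a)
    (hc : ContinuousOn h (Ioi 0)) : IntegrableOn h (Ioc a b) :=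
  ((hc.mono (fun x hx => lt_of_lt_of_le ha hx.1)).integrableOn_Icc).mono_set Ioc_subset_Icc_self

lemma myIntegrableOn_Ioi {h : ℝ → ℝ} {R t : ℝ} (ht : 0 < t)
    (hc : ContinuousOn h (Ioi 0)) (hR : ∀ s ≥ R, h s = 0) :
    IntegrableOn h (Ioi t) := by
  have hsub : Ioi t ⊆ Ioc t (max R t) ∪ Ioi (max R t) := by
    intro x hx
    rcases le_or_gt x (max R t) with h1 | h1
    · exact Or.inl ⟨hx, h1⟩
    · exact Or.inr h1
  apply IntegrableOn.mono_set _ hsub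
  apply IntegrableOn.union (myIntegrableOn_Ioc ht hc)
  have : EqOn h 0 (Ioi (max R t)) := fun x hx => hR x (le_of_lt (lt_of_le_of_lt (le_max_left _ _) hx))
  exact (integrableOn_zero : IntegrableOn (fun _ : ℝ => (0:ℝ)) _ _).congr_fun this.symm measurableSet_Ioi

lemma mySplit {h : ℝ → ℝ} {R a b : ℝ} (ha : 0 < a) (hab : a ≤ b)
    (hc : ContinuousOn h (Ioi 0)) (hR : ∀ s ≥ R, h s = 0) :
    ∫ s in Ioi a, h s = (∫ s in Ioc a b, h s) + ∫ s in Ioi b, h s := by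
  rw [← setIntegral_union (Ioc_disjoint_Ioi le_rfl) measurableSet_Ioi
    (myIntegrableOn_Ioc ha hc) (myIntegrableOn_Ioi (lt_of_lt_of_le ha hab) hc hR),
    Ioc_union_Ioi_eq_Ioi hab]

lemma myHasDerivAt {h : ℝ → ℝ} {R t : ℝ} (ht : 0 < t)
    (hc : ContinuousOn h (Ioi 0)) (hR : ∀ s ≥ R, h s = 0) :
    HasDerivAt (fun u => ∫ s in Ioi u, h s) (-(h t)) t := by
  set t₀ := t / 2 with ht₀def
  have ht₀ : 0 < t₀ := by positivity
  have ht₀t : t₀ < t := by linarith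
  have key : ∀ u > t₀, (∫ s in Ioi u, h s) = (∫ s in Ioi t₀, h s) - ∫ s in t₀..u, h s := by
    intro u hu
    rcases le_or_gt t₀ u with h1 | h1
    · rw [intervalIntegral.integral_of_le h1, mySplit ht₀ h1 hc hR]; ring
    · linarith
  have hd : HasDerivAt (fun u => (∫ s in Ioi t₀, h s) - ∫ s in t₀..u, h s) (-(h t)) t := by
    have hint : IntervalIntegrable h volume t₀ t := by
      rw [intervalIntegrable_iff_integrableOn_Ioc_of_le (le_of_lt ht₀t)]
      exact myIntegrableOn_Ioc ht₀ hc
    have hmeas : StronglyMeasurableAtFilter h (𝓝 t) volume :=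
      hc.stronglyMeasurableAtFilter isOpen_Ioi t ht
    have hco : ContinuousAt h t := (hc t ht).continuousAt (Ioi_mem_nhds ht)
    have := (intervalIntegral.integral_hasDerivAt_right hint hmeas hco).const_sub
      (∫ s in Ioi t₀, h s)
    simpa using this
  apply hd.congr_of_eventuallyEq
  filter_upwards [Ioi_mem_nhds ht₀t] with u hu
  exact key u hu

lemma myZero_of_deriv_zero {f : ℝ → ℝ} {R : ℝ}
    (hd : ∀ t > 0, HasDerivAt f 0 t) (h0 : ∀ t ≥ R, f t = 0) :
    ∀ t > 0, f t = 0 := by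
  intro t ht
  have hb : t ≤ max R t := le_max_right _ _
  have hcont : ContinuousOn f (Icc t (max R t)) := fun x hx =>
    ((hd x (lt_of_lt_of_le ht hx.1)).continuousAt).continuousWithinAt
  have := constant_of_has_deriv_right_zero hcont (fun x hx =>
    ((hd x (lt_of_lt_of_le ht hx.1)).hasDerivWithinAt)) (max R t) ⟨hb, le_rfl⟩
  rw [h0 (max R t) (le_max_left _ _)] at this
  exact this.symm

lemma myRpowCont {α : ℝ} : ContinuousOn (fun s : ℝ => s ^ (-α - 1)) (Ioi 0) :=
  fun x hx => (Real.continuousAt_rpow_const x _ (Or.inl (ne_of_gt hx))).continuousWithinAt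

lemma myIC {α t δ : ℝ} (hα0 : 0 < α) (ht0 : 0 < t) (htδ : t ≤ δ) :
    ∫ s in Ioc t δ, s ^ (-α - 1) = (t ^ (-α) - δ ^ (-α)) / α := by
  have hαne : α ≠ 0 := ne_of_gt hα0
  rw [← intervalIntegral.integral_of_le htδ, integral_rpow]
  · rw [show -α - 1 + 1 = -α by ring, div_neg, ← neg_div, neg_sub]
  · right
    refine ⟨by intro hcon; exact hαne (by linarith), ?_⟩
    rw [Set.uIcc_of_le htδ]
    intro hmem
    exact absurd hmem.1 (not_le.2 ht0)

lemma myApprox {g : ℝ → ℝ} {R α : ℝ} (hα : 1 ≤ α)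
    (hg : ContinuousOn g (Ici 0)) (hR : ∀ s ≥ R, g s = 0) :
    Tendsto (fun t => t ^ α * ∫ s in Ioi t, g s * s ^ (-α - 1)) (𝓝[Ioi 0] 0)
      (𝓝 (g 0 / α)) := by
  have hα0 : (0:ℝ) < α := lt_of_lt_of_le one_pos hα
  have hαne : α ≠ 0 := ne_of_gt hα0
  set h : ℝ → ℝ := fun s => g s * s ^ (-α - 1) with hh
  have hgc : ContinuousOn g (Ioi 0) := hg.mono Ioi_subset_Ici_self
  have hcont : ContinuousOn h (Ioi 0) := hgc.mul myRpowCont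
  set R' := max R 1 with hR'def
  have hR'0 : (0:ℝ) < R' := lt_of_lt_of_le one_pos (le_max_right _ _)
  have hRh : ∀ s ≥ R', h s = 0 := fun s hs => by
    simp [hh, hR s (le_trans (le_max_left _ _) hs)]
  rw [Metric.tendsto_nhdsWithin_nhds]
  intro ε hε
  obtain ⟨δ₁, hδ₁0, hδ₁⟩ := Metric.continuousWithinAt_iff.1 (hg 0 self_mem_Ici)
    (ε * α / 4) (by positivity)
  set δ := min (δ₁ / 2) R' with hδdef
  have hδ0 : 0 < δ := lt_min (by linarith) hR'0
  have hδlt : δ < δ₁ := lt_of_le_of_lt (min_le_left _ _) (by linarith)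
  have hgsmall : ∀ s ∈ Ioc (0:ℝ) δ, |g s - g 0| ≤ ε * α / 4 := by
    intro s hs
    have hd : dist s 0 < δ₁ := by
      rw [Real.dist_eq, sub_zero, abs_of_pos hs.1]
      exact lt_of_le_of_lt hs.2 hδlt
    have := hδ₁ (le_of_lt hs.1) hd
    rw [Real.dist_eq] at this
    exact le_of_lt this
  set Gδ := ∫ s in Ioi δ, h s with hGδdef
  set y := g 0 * δ ^ (-α) / α with hydef
  set C := |y| + |Gδ| with hCdef
  have hC0 : 0 ≤ C := by positivity
  set δ₂ := min 1 (ε / (2 * (C + 1))) with hδ₂def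
  have hδ₂0 : 0 < δ₂ := lt_min one_pos (by positivity)
  refine ⟨min δ δ₂, lt_min hδ0 hδ₂0, ?_⟩
  intro t ht hdist
  rw [Real.dist_eq, sub_zero, abs_of_pos (mem_Ioi.1 ht)] at hdist
  have ht0 : 0 < t := mem_Ioi.1 ht
  have htδ : t < δ := lt_of_lt_of_le hdist (min_le_left _ _)
  have htδ₂ : t < δ₂ := lt_of_lt_of_le hdist (min_le_right _ _)
  have ht1 : t ≤ 1 := le_of_lt (lt_of_lt_of_le htδ₂ (min_le_left _ _))
  set P := t ^ α with hPdef
  set Q := t ^ (-α) with hQdef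
  have hP : 0 < P := Real.rpow_pos_of_pos ht0 _
  have hQ : 0 < Q := Real.rpow_pos_of_pos ht0 _
  have hPQ : P * Q = 1 := by
    rw [hPdef, hQdef, ← Real.rpow_add ht0]
    simp
  set D' := δ ^ (-α) with hD'def
  have hD' : 0 ≤ D' := Real.rpow_nonneg hδ0.le _
  -- t^α ≤ t, so P * C is small
  have hPt : P ≤ t := by
    calc P = t ^ α := rfl
    _ ≤ t ^ (1:ℝ) := Real.rpow_le_rpow_of_exponent_ge ht0 ht1 hα
    _ = t := Real.rpow_one t
  have hPC : P * C < ε / 2 := by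
    have h1 : t < ε / (2 * (C + 1)) := lt_of_lt_of_le htδ₂ (min_le_right _ _)
    have h2 : P * C ≤ t * C := mul_le_mul_of_nonneg_right hPt hC0
    have h5 : t * (2 * (C + 1)) < ε := (lt_div_iff₀ (by positivity)).1 h1
    nlinarith [h2, h5, ht0, hC0]
  -- split the integral
  have hsplit : ∫ s in Ioi t, h s = (∫ s in Ioc t δ, h s) + Gδ :=
    mySplit (R := R') ht0 htδ.le hcont hRh
  -- split the Ioc integral
  have hint1 : IntegrableOn (fun s => (g s - g 0) * s ^ (-α - 1)) (Ioc t δ) :=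
    myIntegrableOn_Ioc ht0 ((hgc.sub continuousOn_const).mul myRpowCont)
  have hint2 : IntegrableOn (fun s : ℝ => s ^ (-α - 1)) (Ioc t δ) :=
    myIntegrableOn_Ioc ht0 myRpowCont
  set E := ∫ s in Ioc t δ, (g s - g 0) * s ^ (-α - 1) with hEdef
  have hA : (∫ s in Ioc t δ, h s) = E + g 0 * ∫ s in Ioc t δ, s ^ (-α - 1) := by
    rw [hEdef, ← integral_const_mul _, ← integral_add hint1 (hint2.const_mul _)]
    apply setIntegral_congr_fun measurableSet_Ioc
    intro s _
    simp only [hh]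
    ring
  have hICval : ∫ s in Ioc t δ, s ^ (-α - 1) = (Q - D') / α := myIC hα0 ht0 htδ.le
  -- bound on E
  have hEbound : |E| ≤ ε / 4 * (Q - D') := by
    have hb : |E| ≤ ∫ s in Ioc t δ, ε * α / 4 * s ^ (-α - 1) := by
      rw [hEdef, ← Real.norm_eq_abs]
      apply norm_integral_le_of_norm_le (hint2.const_mul _)
      refine (ae_restrict_iff' measurableSet_Ioc).2 (Filter.Eventually.of_forall ?_)
      intro s hs
      rw [Real.norm_eq_abs, abs_mul,
        abs_of_nonneg (Real.rpow_nonneg (le_of_lt (lt_trans ht0 hs.1)) _)]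
      exact mul_le_mul_of_nonneg_right (hgsmall s ⟨lt_trans ht0 hs.1, hs.2⟩)
        (Real.rpow_nonneg (le_of_lt (lt_trans ht0 hs.1)) _)
    rw [integral_const_mul _, hICval] at hb
    calc |E| ≤ ε * α / 4 * ((Q - D') / α) := hb
    _ = ε / 4 * (Q - D') := by field_simp
  have hE1 := (abs_le.1 hEbound).1
  have hE2 := (abs_le.1 hEbound).2
  -- assemble
  rw [Real.dist_eq, hsplit, hA, hICval]
  have hexpand : P * (E + g 0 * ((Q - D') / α) + Gδ) - g 0 / α
      = P * E - y * P + P * Gδ - (g 0 / α) * (1 - P * Q) := by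
    rw [hydef]; field_simp; ring
  have hyabs1 : -(|y|) ≤ y := neg_abs_le y
  have hyabs2 : y ≤ |y| := le_abs_self y
  have hGabs1 : -(|Gδ|) ≤ Gδ := neg_abs_le Gδ
  have hGabs2 : Gδ ≤ |Gδ| := le_abs_self Gδ
  rw [abs_lt]
  have hPE2 : P * E ≤ P * (ε / 4 * (Q - D')) := mul_le_mul_of_nonneg_left hE2 hP.le
  have hPE1 : P * (-(ε / 4 * (Q - D'))) ≤ P * E :=
    mul_le_mul_of_nonneg_left (by linarith) hP.le
  have hPD : 0 ≤ P * D' := mul_nonneg hP.le hD'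
  have hεPD : 0 ≤ ε * (P * D') := mul_nonneg hε.le hPD
  have hyP1 : -(|y|) * P ≤ y * P := mul_le_mul_of_nonneg_right hyabs1 hP.le
  have hyP2 : y * P ≤ |y| * P := mul_le_mul_of_nonneg_right hyabs2 hP.le
  have hGP1 : P * (-(|Gδ|)) ≤ P * Gδ := mul_le_mul_of_nonneg_left hGabs1 hP.le
  have hGP2 : P * Gδ ≤ P * |Gδ| := mul_le_mul_of_nonneg_left hGabs2 hP.le
  rw [hexpand, hPQ]
  have hPE2' : P * E ≤ ε / 4 - ε / 4 * (P * D') := by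
    have hring : P * (ε / 4 * (Q - D')) = ε / 4 * (P * Q) - ε / 4 * (P * D') := by ring
    rw [hring, hPQ] at hPE2
    linarith
  have hPE1' : -(ε / 4) + ε / 4 * (P * D') ≤ P * E := by
    have hring : P * (-(ε / 4 * (Q - D'))) = -(ε / 4 * (P * Q)) + ε / 4 * (P * D') := by ring
    rw [hring, hPQ] at hPE1
    linarith
  have hPCexp : P * |y| + P * |Gδ| < ε / 2 := by
    have hPC2 : P * C = P * |y| + P * |Gδ| := by rw [hCdef]; ring
    linarith
  constructor
  · linarith [hεPD, hyP2, hGP1, hPE1', hPCexp]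
  · linarith [hεPD, hyP1, hGP2, hPE2', hPCexp]

lemma myMulRpowCont {f : ℝ → ℝ} (hf : ContinuousOn f (Ioi 0)) (p : ℝ) :
    ContinuousOn (fun s => f s * s ^ p) (Ioi 0) :=
  hf.mul (fun x hx => (Real.continuousAt_rpow_const x p (Or.inl (ne_of_gt hx))).continuousWithinAt)

lemma myIntZero {ψ : ℝ → ℝ} {R t : ℝ} (hR : ∀ s ≥ R, ψ s = 0) (htR : R ≤ t) :
    ∫ s in Ioi t, ψ s = 0 :=
  setIntegral_eq_zero_of_forall_eq_zero fun s hs => hR s (le_trans htR (le_of_lt hs))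

def genMem (α : ℝ) (ζ : ℝ → ℝ) : Prop :=
  ContinuousOn ζ (Set.Ioi (0:ℝ)) ∧ (∀ t ≤ (0:ℝ), ζ t = 0) ∧
  (∃ R : ℝ, ∀ t ≥ R, ζ t = 0) ∧
  Tendsto (fun t => t ^ α * ζ t) (𝓝[Set.Ioi (0:ℝ)] 0) (𝓝 0) ∧
  ∃ L : ℝ, Tendsto (fun t => ∫ s in Set.Ioi t, ζ s * s ^ (α - 1))
    (𝓝[Set.Ioi (0:ℝ)] 0) (𝓝 L)

noncomputable def genMap (α : ℝ) (ζ : ℝ → ℝ) (t : ℝ) : ℝ :=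
  if t ≤ 0 then
    limUnder (𝓝[Set.Ioi (0:ℝ)] 0)
      (fun r => r ^ α * ζ r + α * ∫ s in Set.Ioi r, ζ s * s ^ (α - 1))
  else t ^ α * ζ t + α * ∫ s in Set.Ioi t, ζ s * s ^ (α - 1)

lemma myFormulaContAt {α R : ℝ} {ζ : ℝ → ℝ} {t : ℝ} (ht : 0 < t)
    (hc : ContinuousOn ζ (Ioi 0)) (hR : ∀ s ≥ R, ζ s = 0) :
    ContinuousAt (fun u => u ^ α * ζ u + α * ∫ s in Ioi u, ζ s * s ^ (α - 1)) t := by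
  have hψ : ContinuousOn (fun s => ζ s * s ^ (α - 1)) (Ioi 0) := myMulRpowCont hc _
  have hψR : ∀ s ≥ max R 1, ζ s * s ^ (α - 1) = 0 := fun s hs => by
    rw [hR s (le_trans (le_max_left _ _) hs), zero_mul]
  have hI := (myHasDerivAt ht hψ hψR).continuousAt
  have h1 : ContinuousAt (fun u : ℝ => u ^ α) t :=
    Real.continuousAt_rpow_const t α (Or.inl (ne_of_gt ht))
  exact (h1.mul ((hc t ht).continuousAt (Ioi_mem_nhds ht))).add (continuousAt_const.mul hI)

lemma genMap_pos {α : ℝ} {ζ : ℝ → ℝ} {t : ℝ} (ht : 0 < t) :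
    genMap α ζ t = t ^ α * ζ t + α * ∫ s in Ioi t, ζ s * s ^ (α - 1) := by
  rw [genMap, if_neg (not_le.2 ht)]

-- MapsTo
lemma genMapsTo {α : ℝ} (hα : 1 ≤ α) :
    Set.MapsTo (genMap α) {ζ : ℝ → ℝ | genMem α ζ}
      {g : ℝ → ℝ | ContinuousOn g (Set.Ici (0:ℝ)) ∧ (∃ R : ℝ, ∀ t ≥ R, g t = 0) ∧
        ∀ t ≤ (0:ℝ), g t = g 0} := by
  intro ζ hζ
  obtain ⟨hc, hz, ⟨R, hR⟩, h1, L, h2⟩ := hζ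
  have hα0 : (0:ℝ) < α := lt_of_lt_of_le one_pos hα
  set F : ℝ → ℝ := fun r => r ^ α * ζ r + α * ∫ s in Ioi r, ζ s * s ^ (α - 1) with hFdef
  have hFt : Tendsto F (𝓝[Ioi 0] 0) (𝓝 (0 + α * L)) := h1.add (h2.const_mul α)
  have hval0 : genMap α ζ 0 = 0 + α * L := by
    rw [genMap, if_pos le_rfl]
    exact hFt.limUnder_eq
  have hposEq : ∀ t > (0:ℝ), genMap α ζ t = F t := fun t ht => genMap_pos ht
  refine ⟨?_, ⟨max R 1, ?_⟩, ?_⟩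
  · -- continuity on Ici 0
    intro t ht
    rcases eq_or_lt_of_le (mem_Ici.1 ht) with h0 | htpos
    · -- t = 0
      rw [← h0]
      rw [ContinuousWithinAt, hval0]
      have hIci : Ici (0:ℝ) = Ioi 0 ∪ {0} := (Set.Ioi_union_left).symm
      rw [hIci, nhdsWithin_union, tendsto_sup]
      constructor
      · apply hFt.congr'
        filter_upwards [self_mem_nhdsWithin] with r hr
        exact (hposEq r hr).symm
      · rw [nhdsWithin_singleton]
        simpa [hval0] using (tendsto_pure_nhds (genMap α ζ) 0)
    · -- t > 0
      apply ContinuousAt.continuousWithinAt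
      apply (myFormulaContAt htpos hc hR).congr
      filter_upwards [Ioi_mem_nhds htpos] with u hu
      exact (hposEq u hu).symm
  · -- compact support
    intro t htR
    have ht1 : (0:ℝ) < t := lt_of_lt_of_le (lt_of_lt_of_le one_pos (le_max_right R 1)) htR
    rw [genMap_pos ht1, hR t (le_trans (le_max_left _ _) htR)]
    have : ∫ s in Ioi t, ζ s * s ^ (α - 1) = 0 := by
      apply myIntZero (R := max R 1) _ htR
      intro s hs
      rw [hR s (le_trans (le_max_left _ _) hs), zero_mul]
    rw [this]
    ring
  · -- constant on (-∞, 0]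
    intro t ht
    rw [genMap, if_pos ht, genMap, if_pos le_rfl]
lemma genInjOn {α : ℝ} (hα : 1 ≤ α) :
    Set.InjOn (genMap α) {ζ : ℝ → ℝ | genMem α ζ} := by
  have hα0 : (0:ℝ) < α := lt_of_lt_of_le one_pos hα
  intro ζ₁ hζ₁ ζ₂ hζ₂ heq
  obtain ⟨hc₁, hz₁, ⟨R₁, hR₁⟩, _, _⟩ := hζ₁
  obtain ⟨hc₂, hz₂, ⟨R₂, hR₂⟩, _, _⟩ := hζ₂
  set R := max (max R₁ R₂) 1 with hRdef
  have hR₁' : ∀ s ≥ R, ζ₁ s = 0 := fun s hs =>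
    hR₁ s (le_trans (le_trans (le_max_left _ _) (le_max_left _ _)) hs)
  have hR₂' : ∀ s ≥ R, ζ₂ s = 0 := fun s hs =>
    hR₂ s (le_trans (le_trans (le_max_right _ _) (le_max_left _ _)) hs)
  have hψ₁ : ∀ s ≥ R, ζ₁ s * s ^ (α - 1) = 0 := fun s hs => by rw [hR₁' s hs, zero_mul]
  have hψ₂ : ∀ s ≥ R, ζ₂ s * s ^ (α - 1) = 0 := fun s hs => by rw [hR₂' s hs, zero_mul]
  set I₁ : ℝ → ℝ := fun u => ∫ s in Ioi u, ζ₁ s * s ^ (α - 1) with hI₁def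
  set I₂ : ℝ → ℝ := fun u => ∫ s in Ioi u, ζ₂ s * s ^ (α - 1) with hI₂def
  set J : ℝ → ℝ := fun u => I₁ u - I₂ u with hJdef
  set K : ℝ → ℝ := fun u => J u * u ^ (-α) with hKdef
  -- the pointwise relation from heq
  have hrel : ∀ u > (0:ℝ), u ^ α * ζ₁ u + α * I₁ u = u ^ α * ζ₂ u + α * I₂ u := by
    intro u hu
    have := congrFun heq u
    rwa [genMap_pos hu, genMap_pos hu] at this
  -- K has zero derivative
  have hKd : ∀ u > (0:ℝ), HasDerivAt K 0 u := by
    intro u hu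
    have hJd : HasDerivAt J (-(ζ₁ u * u ^ (α - 1)) - -(ζ₂ u * u ^ (α - 1))) u :=
      (myHasDerivAt hu (myMulRpowCont hc₁ _) hψ₁).sub (myHasDerivAt hu (myMulRpowCont hc₂ _) hψ₂)
    have hrp : HasDerivAt (fun x : ℝ => x ^ (-α)) (-α * u ^ (-α - 1)) u :=
      Real.hasDerivAt_rpow_const (Or.inl (ne_of_gt hu))
    have := hJd.mul hrp
    refine this.congr_deriv ?_
    symm
    have r3 : u ^ (-α) * u ^ (α - 1) = u ^ (-α - 1) * u ^ α := by
      rw [← Real.rpow_add hu, ← Real.rpow_add hu,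
        show -α + (α - 1) = (-1:ℝ) by ring, show -α - 1 + α = (-1:ℝ) by ring]
    have h := hrel u hu
    simp only [hJdef]
    linear_combination (u ^ (-α - 1)) * h + (ζ₁ u - ζ₂ u) * r3
  -- K vanishes at infinity
  have hK0 : ∀ u ≥ R, K u = 0 := by
    intro u hu
    have : J u = 0 := by
      simp only [hJdef, hI₁def, hI₂def]
      rw [myIntZero hψ₁ hu, myIntZero hψ₂ hu, sub_zero]
    simp [hKdef, this]
  have hKzero := myZero_of_deriv_zero hKd hK0
  -- hence J = 0 on Ioi 0, hence ζ₁ = ζ₂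
  funext t
  rcases le_or_gt t 0 with ht | ht
  · rw [hz₁ t ht, hz₂ t ht]
  · have hJt : J t = 0 := by
      have hK := hKzero t ht
      have hne : t ^ (-α) ≠ 0 := (Real.rpow_pos_of_pos ht _).ne'
      simpa only [hKdef, mul_eq_zero, hne, or_false] using hK
    have h := hrel t ht
    have hJt' : I₁ t - I₂ t = 0 := hJt
    have hne : t ^ α ≠ 0 := (Real.rpow_pos_of_pos ht _).ne'
    have hI12 : I₁ t = I₂ t := by linarith
    rw [hI12] at h
    have : t ^ α * ζ₁ t = t ^ α * ζ₂ t := by linarith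
    exact mul_left_cancel₀ hne this
lemma genSurjOn {α : ℝ} (hα : 1 ≤ α) :
    Set.SurjOn (genMap α) {ζ : ℝ → ℝ | genMem α ζ}
      {g : ℝ → ℝ | ContinuousOn g (Set.Ici (0:ℝ)) ∧ (∃ R : ℝ, ∀ t ≥ R, g t = 0) ∧
        ∀ t ≤ (0:ℝ), g t = g 0} := by
  have hα0 : (0:ℝ) < α := lt_of_lt_of_le one_pos hα
  have hαne : α ≠ 0 := ne_of_gt hα0
  intro g hg
  obtain ⟨hgc, ⟨R₀, hgR₀⟩, hgconst⟩ := hg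
  set R := max R₀ 1 with hRdef
  have hR0 : (0:ℝ) < R := lt_of_lt_of_le one_pos (le_max_right _ _)
  have hgR : ∀ s ≥ R, g s = 0 := fun s hs => hgR₀ s (le_trans (le_max_left _ _) hs)
  have hgIoi : ContinuousOn g (Ioi 0) := hgc.mono Ioi_subset_Ici_self
  set G : ℝ → ℝ := fun t => ∫ s in Ioi t, g s * s ^ (-α - 1) with hGdef
  have hφc : ContinuousOn (fun s => g s * s ^ (-α - 1)) (Ioi 0) := myMulRpowCont hgIoi _
  have hφR : ∀ s ≥ R, g s * s ^ (-α - 1) = 0 := fun s hs => by rw [hgR s hs, zero_mul]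
  have hGd : ∀ t > (0:ℝ), HasDerivAt G (-(g t * t ^ (-α - 1))) t := fun t ht =>
    myHasDerivAt ht hφc hφR
  set ζ : ℝ → ℝ := fun t => if t ≤ 0 then 0 else t ^ (-α) * g t - α * G t with hζdef
  have hζpos : ∀ t > (0:ℝ), ζ t = t ^ (-α) * g t - α * G t := fun t ht => by
    simp only [hζdef, if_neg (not_le.2 ht)]
  have hζc : ContinuousOn ζ (Ioi 0) := by
    intro t ht
    apply ContinuousAt.continuousWithinAt
    have hformula : ContinuousAt (fun u => u ^ (-α) * g u - α * G u) t := by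
      have h1 : ContinuousAt (fun u : ℝ => u ^ (-α)) t :=
        Real.continuousAt_rpow_const t _ (Or.inl (ne_of_gt ht))
      have h2 : ContinuousAt g t := (hgc t (mem_Ici.2 (le_of_lt ht))).continuousAt (Ici_mem_nhds ht)
      exact (h1.mul h2).sub (continuousAt_const.mul (hGd t ht).continuousAt)
    apply hformula.congr
    filter_upwards [Ioi_mem_nhds ht] with u hu
    exact (hζpos u hu).symm
  have hζz : ∀ t ≤ (0:ℝ), ζ t = 0 := fun t ht => by simp [hζdef, ht]
  have hζR : ∀ t ≥ R, ζ t = 0 := by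
    intro t htR
    have ht : 0 < t := lt_of_lt_of_le hR0 htR
    have hGz : G t = 0 := myIntZero hφR htR
    rw [hζpos t ht, hgR t htR, hGz]
    ring
  have hψc : ContinuousOn (fun s => ζ s * s ^ (α - 1)) (Ioi 0) := myMulRpowCont hζc _
  have hψR : ∀ s ≥ R, ζ s * s ^ (α - 1) = 0 := fun s hs => by rw [hζR s hs, zero_mul]
  set Iζ : ℝ → ℝ := fun t => ∫ s in Ioi t, ζ s * s ^ (α - 1) with hIdef
  set W : ℝ → ℝ := fun t => Iζ t - t ^ α * G t with hWdef
  have hWd : ∀ t > (0:ℝ), HasDerivAt W 0 t := by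
    intro t ht
    have h1 : HasDerivAt Iζ (-(ζ t * t ^ (α - 1))) t := myHasDerivAt ht hψc hψR
    have h2 : HasDerivAt (fun u : ℝ => u ^ α) (α * t ^ (α - 1)) t :=
      Real.hasDerivAt_rpow_const (Or.inl (ne_of_gt ht))
    have h3 := h2.mul (hGd t ht)
    have h4 := h1.sub h3
    refine h4.congr_deriv ?_
    symm
    rw [hζpos t ht]
    have r4 : t ^ (-α) * t ^ (α - 1) = t ^ α * t ^ (-α - 1) := by
      rw [← Real.rpow_add ht, ← Real.rpow_add ht,
        show -α + (α - 1) = (-1:ℝ) by ring, show α + (-α - 1) = (-1:ℝ) by ring]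
    linear_combination (g t) * r4
  have hW0 : ∀ t ≥ R, W t = 0 := by
    intro t htR
    have hIz : Iζ t = 0 := myIntZero hψR htR
    have hGz : G t = 0 := myIntZero hφR htR
    simp [hWdef, hIz, hGz]
  have hkey := myZero_of_deriv_zero hWd hW0
  have hIval : ∀ t > (0:ℝ), Iζ t = t ^ α * G t := by
    intro t ht
    have h := hkey t ht
    simp only [hWdef] at h
    linarith
  have htends : Tendsto (fun t => t ^ α * G t) (𝓝[Ioi 0] 0) (𝓝 (g 0 / α)) :=
    myApprox hα hgc hgR
  have hgtends : Tendsto g (𝓝[Ioi 0] 0) (𝓝 (g 0)) :=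
    (hgc 0 self_mem_Ici).mono Ioi_subset_Ici_self
  have hone : ∀ t > (0:ℝ), t ^ α * t ^ (-α) = 1 := fun t ht => by
    rw [← Real.rpow_add ht]; simp
  have hlim1 : Tendsto (fun t => t ^ α * ζ t) (𝓝[Ioi 0] 0) (𝓝 0) := by
    have h := hgtends.sub (htends.const_mul α)
    have hz : g 0 - α * (g 0 / α) = 0 := by field_simp; ring
    rw [hz] at h
    apply h.congr'
    filter_upwards [self_mem_nhdsWithin] with t ht
    rw [hζpos t ht, mul_sub,
      show t ^ α * (t ^ (-α) * g t) = (t ^ α * t ^ (-α)) * g t by ring, hone t ht, one_mul]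
    ring
  have hlim2 : Tendsto Iζ (𝓝[Ioi 0] 0) (𝓝 (g 0 / α)) := by
    apply htends.congr'
    filter_upwards [self_mem_nhdsWithin] with t ht
    exact (hIval t ht).symm
  have hF : ∀ t > (0:ℝ), t ^ α * ζ t + α * Iζ t = g t := by
    intro t ht
    rw [hIval t ht, hζpos t ht, mul_sub, ← mul_assoc, hone t ht, one_mul]
    ring
  refine ⟨ζ, ⟨hζc, hζz, ⟨R, hζR⟩, hlim1, g 0 / α, hlim2⟩, ?_⟩
  funext t
  rcases le_or_gt t 0 with ht | ht
  · rw [genMap, if_pos ht, hgconst t ht]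
    have hFg : (fun r => r ^ α * ζ r + α * ∫ s in Ioi r, ζ s * s ^ (α - 1))
        =ᶠ[𝓝[Ioi 0] 0] g := by
      filter_upwards [self_mem_nhdsWithin] with r hr
      exact hF r hr
    exact (hgtends.congr' hFg.symm).limUnder_eq
  · rw [genMap_pos ht]
    exact hF t ht

/-- `R^{n-j} : D^n_j → C_c([0,∞))` is a well-defined bijection onto the space of continuous
functions on `[0,∞)` with compact support (encoded as functions on `ℝ` that are constant on
`(-∞,0]`). -/
theorem Rmap_bijective (n j : ℕ) (hn : 2 ≤ n) (hj1 : 1 ≤ j) (hj2 : j ≤ n - 1) :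
    Set.BijOn (Rmap n j) {ζ : ℝ → ℝ | DnjMem n j ζ}
      {g : ℝ → ℝ | ContinuousOn g (Set.Ici (0:ℝ)) ∧ (∃ R : ℝ, ∀ t ≥ R, g t = 0) ∧
        ∀ t ≤ (0:ℝ), g t = g 0} := by
  have hjn : j + 1 ≤ n := by omega
  have hα : 1 ≤ (n:ℝ) - j := by
    have h : ((j:ℝ) + 1) ≤ (n:ℝ) := by exact_mod_cast hjn
    linarith
  have h1 : Rmap n j = genMap ((n:ℝ) - j) := rfl
  have h2 : {ζ : ℝ → ℝ | DnjMem n j ζ} = {ζ : ℝ → ℝ | genMem ((n:ℝ) - j) ζ} := rfl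
  rw [h1, h2]
  exact ⟨genMapsTo hα, genInjOn hα, genSurjOn hα⟩
end

section
/- Let a > 0 and suppose f ∈ D^a satisfies I_a(f)(s) = 0 for all s ∈ [-1,1]\{0}, where I_a(f)(s) = sign(s)[s^{-1}(1-s²)^a f(s) + 2a∫_{-sign(s)}^s f(t)(1-t²)^{a-1} dt]. Then f is linear, i.e., there exists c ∈ ℝ with f(s) = c·s for all s ∈ (-1,1). -/
open Filter Topology MeasureTheory

/-- If `f ∈ D^a` satisfies `I_a(f)(s) = 0` for all `s ∈ [-1,1] \ {0}`, then `f` is linear. -/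
theorem Ia_kernel_linear (a : ℝ) (ha : 0 < a) (f : ℝ → ℝ) (hf : MemDa a f)
    (hIa : ∀ s ∈ Set.Icc (-1:ℝ) 1 \ {0}, Ia a f s = 0) :
    ∃ c : ℝ, ∀ s ∈ Set.Ioo (-1:ℝ) 1, f s = c * s := by
  obtain ⟨hcont, -, -, ⟨Lp, hLp⟩, ⟨Lm, hLm⟩⟩ := hf
  haveI h1 : (𝓝[Set.Ioo (-1:ℝ) 1] (1:ℝ)).NeBot := by
    rw [← mem_closure_iff_nhdsWithin_neBot, closure_Ioo (by norm_num : (-1:ℝ) ≠ 1)]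
    constructor <;> norm_num
  haveI h2 : (𝓝[Set.Ioo (-1:ℝ) 1] (-1:ℝ)).NeBot := by
    rw [← mem_closure_iff_nhdsWithin_neBot, closure_Ioo (by norm_num : (-1:ℝ) ≠ 1)]
    constructor <;> norm_num
  have hE1 : DaIntE a f 1 = Lp := by
    rw [DaIntE, if_neg (by simp), DaLim, hLp.limUnder_eq]
  have hEm1 : DaIntE a f (-1) = Lm := by
    rw [DaIntE, if_neg (by simp), DaLim, hLm.limUnder_eq]
  have hEIoo : ∀ s ∈ Set.Ioo (-1:ℝ) 1, DaIntE a f s = DaInt a f s := fun s hs => if_pos hs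
  -- L_+ = L_-
  have hLpm : Lp = Lm := by
    have h := hIa 1 ⟨⟨by norm_num, le_refl 1⟩, by norm_num⟩
    rw [Ia, Real.sign_one, hE1] at h
    norm_num [Real.zero_rpow ha.ne', hEm1] at h
    rcases h with h | h
    · exact absurd h ha.ne'
    · linarith
  -- continuity of the integrand
  have hgc : ∀ s ∈ Set.Ioo (-1:ℝ) 1, ContinuousAt (fun t => (1 - t ^ 2) ^ (a-1) * f t) s := by
    intro s hs
    have h1 : (0:ℝ) < 1 - s ^ 2 := by nlinarith [hs.1, hs.2]
    exact (ContinuousAt.rpow_const ((continuous_const.sub (continuous_pow 2)).continuousAt)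
      (Or.inl h1.ne')).mul (hcont.continuousAt (isOpen_Ioo.mem_nhds hs))
  -- FTC : derivative of DaInt
  have hFderiv : ∀ s ∈ Set.Ioo (-1:ℝ) 1,
      HasDerivAt (DaInt a f) ((1 - s ^ 2) ^ (a-1) * f s) s := by
    intro s hs
    have hsub : Set.uIcc 0 s ⊆ Set.Ioo (-1:ℝ) 1 :=
      Set.ordConnected_Ioo.uIcc_subset (by constructor <;> norm_num) hs
    have hint : IntervalIntegrable (fun t => (1 - t ^ 2) ^ (a-1) * f t) volume 0 s :=
      ContinuousOn.intervalIntegrable (fun t ht => (hgc t (hsub ht)).continuousWithinAt)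
    exact intervalIntegral.integral_hasDerivAt_right hint
      (ContinuousAt.stronglyMeasurableAtFilter isOpen_Ioo hgc s hs) (hgc s hs)
  -- the key pointwise identity
  have hEq : ∀ s ∈ Set.Ioo (-1:ℝ) 1, s ≠ 0 →
      (1 - s ^ 2) ^ a * f s = -(2*a*s) * (DaInt a f s - Lm) := by
    intro s hs hs0
    have h := hIa s ⟨⟨hs.1.le, hs.2.le⟩, hs0⟩
    rw [Ia, hEIoo s hs] at h
    rcases hs0.lt_or_gt with hneg | hpos
    · rw [Real.sign_of_neg hneg] at h
      rw [neg_neg, hE1, hLpm] at h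
      have h' : s⁻¹ * (1 - s ^ 2) ^ a * f s + 2 * a * (DaInt a f s - Lm) = 0 := by
        linarith [h]
      field_simp at h'
      linarith [h']
    · rw [Real.sign_of_pos hpos, hEm1] at h
      have h' : s⁻¹ * (1 - s ^ 2) ^ a * f s + 2 * a * (DaInt a f s - Lm) = 0 := by
        linarith [h]
      field_simp at h'
      linarith [h']
  set G : ℝ → ℝ := fun s => (DaInt a f s - Lm) * (1 - s ^ 2) ^ (-a) with hGdef
  have hGderiv : ∀ s ∈ Set.Ioo (-1:ℝ) 1, s ≠ 0 → HasDerivAt G 0 s := by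
    intro s hs hs0
    have h1 : (0:ℝ) < 1 - s ^ 2 := by nlinarith [hs.1, hs.2]
    have hb : HasDerivAt (fun t : ℝ => 1 - t ^ 2) (-(2*s)) s := by
      simpa using ((hasDerivAt_pow 2 s).const_sub 1)
    have hpow : HasDerivAt (fun t : ℝ => (1 - t ^ 2) ^ (-a))
        ((-a) * (1 - s ^ 2) ^ (-a-1) * (-(2*s))) s :=
      by have h := (Real.hasDerivAt_rpow_const (x := 1 - s ^ 2) (p := -a) (Or.inl h1.ne')).comp s hb; exact h
    have hprod : HasDerivAt G
        (((1 - s ^ 2) ^ (a-1) * f s) * (1 - s ^ 2) ^ (-a)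
          + (DaInt a f s - Lm) * ((-a) * (1 - s ^ 2) ^ (-a-1) * (-(2*s)))) s :=
      ((hFderiv s hs).sub_const Lm).mul hpow
    convert hprod using 1
    have hE := hEq s hs hs0
    have hA : (1 - s ^ 2) ≠ 0 := h1.ne'
    rw [Real.rpow_sub h1, Real.rpow_one, show (-a-1 : ℝ) = -a - 1 from rfl,
      Real.rpow_sub h1, Real.rpow_one] at *
    field_simp
    linear_combination (-(1 - s ^ 2) ^ (-a)) * hE
  -- continuity of G at 0 with value -Lm
  have hG0 : G 0 = -Lm := by
    simp [hGdef, DaInt, intervalIntegral.integral_same, Real.one_rpow]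
  have hGc0 : ContinuousAt G 0 := by
    have hF0 : ContinuousAt (DaInt a f) 0 :=
      (hFderiv 0 (by constructor <;> norm_num)).continuousAt
    exact (hF0.sub continuousAt_const).mul
      (ContinuousAt.rpow_const (by fun_prop) (Or.inl (by norm_num)))
  have hGconst : ∀ s ∈ Set.Ioo (-1:ℝ) 1, s ≠ 0 → G s = -Lm := by
    intro s hs hs0
    rcases hs0.lt_or_gt with hneg | hpos
    · -- s < 0 : G is constant on [s, 0)
      have hkey : ∀ t ∈ Set.Ico s 0, G t = G s := by
        intro t ht
        have hsub : Set.Icc s t ⊆ Set.Ioo (-1:ℝ) 1 \ {0} := by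
          intro x hx
          exact ⟨⟨lt_of_lt_of_le hs.1 hx.1, lt_trans (lt_of_le_of_lt hx.2 ht.2) one_pos⟩,
            by simp [ne_of_lt (lt_of_le_of_lt hx.2 ht.2)]⟩
        exact constant_of_has_deriv_right_zero
          (fun x hx => ((hGderiv x (hsub hx).1 (hsub hx).2).continuousAt).continuousWithinAt)
          (fun x hx => ((hGderiv x (hsub (Set.Ico_subset_Icc_self hx)).1
            (hsub (Set.Ico_subset_Icc_self hx)).2).hasDerivWithinAt))
          t ⟨ht.1, le_refl t⟩
      have hmem : Set.Ico s 0 ∈ 𝓝[<] (0:ℝ) := Ico_mem_nhdsLT_of_mem ⟨hneg, le_refl 0⟩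
      have ht1 : Tendsto G (𝓝[<] (0:ℝ)) (𝓝 (G s)) :=
        tendsto_const_nhds.congr' (by filter_upwards [hmem] with t ht using (hkey t ht).symm)
      have ht2 : Tendsto G (𝓝[<] (0:ℝ)) (𝓝 (-Lm)) := by
        rw [← hG0]; exact hGc0.continuousWithinAt
      exact tendsto_nhds_unique ht1 ht2
    · -- 0 < s : G is constant on (0, s]
      have hkey : ∀ t ∈ Set.Ioc 0 s, G s = G t := by
        intro t ht
        have hsub : Set.Icc t s ⊆ Set.Ioo (-1:ℝ) 1 \ {0} := by
          intro x hx
          exact ⟨⟨lt_trans (by norm_num) (lt_of_lt_of_le ht.1 hx.1), lt_of_le_of_lt hx.2 hs.2⟩,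
            by simp [(ne_of_gt (lt_of_lt_of_le ht.1 hx.1))]⟩
        exact constant_of_has_deriv_right_zero
          (fun x hx => ((hGderiv x (hsub hx).1 (hsub hx).2).continuousAt).continuousWithinAt)
          (fun x hx => ((hGderiv x (hsub (Set.Ico_subset_Icc_self hx)).1
            (hsub (Set.Ico_subset_Icc_self hx)).2).hasDerivWithinAt))
          s ⟨ht.2, le_refl s⟩
      have hmem : Set.Ioc 0 s ∈ 𝓝[>] (0:ℝ) := Ioc_mem_nhdsGT_of_mem ⟨le_refl 0, hpos⟩
      have ht1 : Tendsto G (𝓝[>] (0:ℝ)) (𝓝 (G s)) :=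
        tendsto_const_nhds.congr' (by filter_upwards [hmem] with t ht using (hkey t ht))
      have ht2 : Tendsto G (𝓝[>] (0:ℝ)) (𝓝 (-Lm)) := by
        rw [← hG0]; exact hGc0.continuousWithinAt
      exact tendsto_nhds_unique ht1 ht2
  -- the linear formula off 0
  have hlin : ∀ s ∈ Set.Ioo (-1:ℝ) 1, s ≠ 0 → f s = 2*a*Lm * s := by
    intro s hs hs0
    have h1 : (0:ℝ) < 1 - s ^ 2 := by nlinarith [hs.1, hs.2]
    have hPpos : (0:ℝ) < (1 - s ^ 2) ^ a := Real.rpow_pos_of_pos h1 a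
    have hPQ : (1 - s ^ 2) ^ a * (1 - s ^ 2) ^ (-a) = 1 := by
      rw [← Real.rpow_add h1]; simp
    have hG := hGconst s hs hs0
    have hFs : DaInt a f s - Lm = -Lm * (1 - s ^ 2) ^ a := by
      have := congrArg (fun x => x * (1 - s ^ 2) ^ a) hG
      simp only [hGdef] at this
      calc DaInt a f s - Lm = (DaInt a f s - Lm) * ((1 - s ^ 2) ^ (-a) * (1 - s ^ 2) ^ a) := by
            rw [mul_comm ((1 - s ^ 2) ^ (-a)) _, hPQ, mul_one]
        _ = -Lm * (1 - s ^ 2) ^ a := by rw [← mul_assoc, this]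
    have hE := hEq s hs hs0
    rw [hFs] at hE
    have : (1 - s ^ 2) ^ a * f s = (1 - s ^ 2) ^ a * (2*a*Lm * s) := by
      rw [hE]; ring
    exact mul_left_cancel₀ hPpos.ne' this
  refine ⟨2*a*Lm, ?_⟩
  intro s hs
  by_cases hs0 : s = 0
  · subst hs0
    haveI h3 : (𝓝[Set.Ioo (0:ℝ) 1] (0:ℝ)).NeBot := by
      rw [← mem_closure_iff_nhdsWithin_neBot, closure_Ioo (by norm_num : (0:ℝ) ≠ 1)]
      constructor <;> norm_num
    have hfc : Tendsto f (𝓝[Set.Ioo (0:ℝ) 1] (0:ℝ)) (𝓝 (f 0)) :=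
      ((hcont.continuousAt (isOpen_Ioo.mem_nhds (by constructor <;> norm_num))).tendsto).mono_left
        nhdsWithin_le_nhds
    have hfc2 : Tendsto f (𝓝[Set.Ioo (0:ℝ) 1] (0:ℝ)) (𝓝 0) := by
      have : Tendsto (fun t : ℝ => 2*a*Lm * t) (𝓝[Set.Ioo (0:ℝ) 1] (0:ℝ)) (𝓝 0) := by
        have hc : Continuous (fun t : ℝ => 2*a*Lm * t) := by fun_prop
        have := (hc.tendsto 0).mono_left
          (nhdsWithin_le_nhds : 𝓝[Set.Ioo (0:ℝ) 1] (0:ℝ) ≤ 𝓝 0)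
        simpa using this
      refine this.congr' ?_
      filter_upwards [self_mem_nhdsWithin] with t ht
      exact (hlin t ⟨lt_trans (by norm_num) ht.1, ht.2⟩ (ne_of_gt ht.1)).symm
    rw [tendsto_nhds_unique hfc hfc2]
    ring
  · rw [hlin s hs hs0]
end
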